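/- arXiv:1804.10100 — 8 statements merged into one kernel-verified Lean document; each statement's English description precedes it below -/
import Mathlib

section
/- Fix a positive definite density matrix σ on a finite-dimensional Hilbert space and define ‖X‖_{p,σ} := (tr|σ^{1/(2p)} X σ^{1/(2p)}|^p)^{1/p}. Then for positive definite X and Y and any p < 1 (p ≠ 0) with Hölder conjugate p̂, the weighted inner product ⟨X,Y⟩_σ := tr(σ^{1/2} X σ^{1/2} Y) satisfies ⟨X,Y⟩_σ ≥ ‖X‖_{p,σ} · ‖Y‖_{p̂,σ}. -/
open Matrix BigOperators
open scoped ComplexOrder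

noncomputable section

variable {n : Type*} [Fintype n] [DecidableEq n]

/-- Apply a real function to a matrix via its spectral decomposition
(defined to be `0` if the matrix is not Hermitian). -/
noncomputable def matFun (A : Matrix n n ℂ) (f : ℝ → ℝ) : Matrix n n ℂ :=
  if hA : A.IsHermitian then
    (hA.eigenvectorUnitary : Matrix n n ℂ) *
      Matrix.diagonal (fun i => (f (hA.eigenvalues i) : ℂ)) *
      star (hA.eigenvectorUnitary : Matrix n n ℂ)
  else 0

/-- Real power of a (Hermitian) matrix. -/
noncomputable def mpow (A : Matrix n n ℂ) (r : ℝ) : Matrix n n ℂ :=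
  matFun A (fun x => x ^ r)

/-- Logarithm of a (Hermitian) matrix. -/
noncomputable def mlog (A : Matrix n n ℂ) : Matrix n n ℂ :=
  matFun A Real.log

/-- Absolute value `|X| = √(X† X)` of a matrix. -/
noncomputable def mAbs (X : Matrix n n ℂ) : Matrix n n ℂ :=
  mpow (Xᴴ * X) (1/2 : ℝ)

/-- Schatten `p`-(quasi)norm `(tr |X|^p)^{1/p}`. -/
noncomputable def schatten (p : ℝ) (X : Matrix n n ℂ) : ℝ :=
  ((mpow (mAbs X) p).trace.re) ^ (1/p)

/-- `Γ_σ^{1/p}(X) = σ^{1/(2p)} X σ^{1/(2p)}`. -/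
noncomputable def gammaPow (σ : Matrix n n ℂ) (p : ℝ) (X : Matrix n n ℂ) :
    Matrix n n ℂ :=
  mpow σ (1/(2*p)) * X * mpow σ (1/(2*p))

/-- Weighted norm `‖X‖_{p,σ} = ‖Γ_σ^{1/p}(X)‖_p`. -/
noncomputable def wnorm (σ : Matrix n n ℂ) (p : ℝ) (X : Matrix n n ℂ) : ℝ :=
  schatten p (gammaPow σ p X)

/-- The power operator `I_{q,p}(X) = Γ_σ^{-1/q}(|Γ_σ^{1/p}(X)|^{p/q})`. -/
noncomputable def powOp (σ : Matrix n n ℂ) (q p : ℝ) (X : Matrix n n ℂ) :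
    Matrix n n ℂ :=
  mpow σ (-(1/(2*q))) * mpow (mAbs (gammaPow σ p X)) (p/q) * mpow σ (-(1/(2*q)))

/-- Umegaki relative entropy `D(ρ‖σ) = tr(ρ log ρ) - tr(ρ log σ)`. -/
noncomputable def relEnt (ρ σ : Matrix n n ℂ) : ℝ :=
  ((ρ * mlog ρ).trace - (ρ * mlog σ).trace).re

/-- The entropy function `Ent_{p,σ}(X)`. -/
noncomputable def Ent (σ : Matrix n n ℂ) (p : ℝ) (X : Matrix n n ℂ) : ℝ :=
  ((mpow (gammaPow σ p X) p * mlog (mpow (gammaPow σ p X) p)).trace).re -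
    ((mpow (gammaPow σ p X) p * mlog σ).trace).re -
    (wnorm σ p X) ^ p * Real.log ((wnorm σ p X) ^ p)

end

/-!
Put `A = Γ_σ^{1/p}(X)` and `B = Γ_σ^{1/p̂}(Y)`; both are positive definite. Splitting
`σ^{1/2} = σ^{1/(2p)} σ^{1/(2p̂)}` and cycling the trace gives `⟨X, Y⟩_σ = tr(AB)`, while the
weighted norms are the Schatten quasi-norms of `A` and `B`. Diagonalizing `A = U diag(a) U*` and
`B = V diag(b) V*` gives `tr(AB) = ∑ᵢⱼ |Wᵢⱼ|² aᵢ bⱼ` with `W = U*V` unitary, so the weights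
`|Wᵢⱼ|²` are doubly stochastic and the claim becomes the scalar reverse Hölder inequality for them.
For `0 < p < 1` that inequality is Hölder's inequality with exponents `1/p` and `1/(1-p)` applied to
`(w f g)^p (w g^p̂)^(1-p) = w f^p`; for `p < 0` the roles of `p` and `p̂` are exchanged.
-/

section ReverseHolder

open Finset

variable {ι : Type*} [Fintype ι]

lemma sum_rpow_mul_rpow_le {u v : ι → ℝ} (hu : ∀ i, 0 ≤ u i) (hv : ∀ i, 0 ≤ v i) {p : ℝ}
    (hp0 : 0 < p) (hp1 : p < 1) :
    ∑ i, u i ^ p * v i ^ (1 - p) ≤ (∑ i, u i) ^ p * (∑ i, v i) ^ (1 - p) := by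
  have hholder := Real.inner_le_Lp_mul_Lq_of_nonneg univ
    (Real.HolderConjugate.inv_one_sub_inv hp0 hp1) (f := fun i => u i ^ p)
    (g := fun i => v i ^ (1 - p)) (fun i _ => Real.rpow_nonneg (hu i) p)
    (fun i _ => Real.rpow_nonneg (hv i) _)
  have hp1' : 1 - p ≠ 0 := (sub_pos.mpr hp1).ne'
  simpa only [← Real.rpow_mul (hu _), ← Real.rpow_mul (hv _), mul_inv_cancel₀ hp0.ne',
    mul_inv_cancel₀ hp1', Real.rpow_one, one_div, inv_inv] using hholder

lemma mul_mul_rpow_mul_mul_rpow_one_sub {w f g p q : ℝ} (hw : 0 ≤ w) (hf : 0 ≤ f) (hg : 0 < g)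
    (hqp : q * (1 - p) = -p) : (w * f * g) ^ p * (w * g ^ q) ^ (1 - p) = w * f ^ p := by
  have hw' : w ^ p * w ^ (1 - p) = w := by
    rw [← Real.rpow_add' hw (by norm_num), add_sub_cancel, Real.rpow_one]
  have hg' : g ^ p * g ^ (-p) = 1 := by
    rw [← Real.rpow_add hg, add_neg_cancel, Real.rpow_zero]
  rw [Real.mul_rpow (mul_nonneg hw hf) hg.le, Real.mul_rpow hw hf,
    Real.mul_rpow hw (Real.rpow_nonneg hg.le q), ← Real.rpow_mul hg.le, hqp]
  linear_combination (f ^ p * g ^ p * g ^ (-p)) * hw' + w * f ^ p * hg'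

lemma Lp_mul_Lq_le_inner_of_pos_of_lt_one {w f g : ι → ℝ} (hw : ∀ i, 0 ≤ w i)
    (hf : ∀ i, 0 ≤ f i) (hg : ∀ i, 0 < g i) {p q : ℝ} (hp0 : 0 < p) (hp1 : p < 1)
    (hpq : 1 / p + 1 / q = 1) :
    (∑ i, w i * f i ^ p) ^ (1 / p) * (∑ i, w i * g i ^ q) ^ (1 / q) ≤ ∑ i, w i * f i * g i := by
  set R := ∑ i, w i * g i ^ q
  have hS : 0 ≤ ∑ i, w i * f i * g i :=
    sum_nonneg fun i _ => mul_nonneg (mul_nonneg (hw i) (hf i)) (hg i).le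
  have hR : 0 ≤ R := sum_nonneg fun i _ => mul_nonneg (hw i) (Real.rpow_nonneg (hg i).le q)
  have hT : 0 ≤ ∑ i, w i * f i ^ p :=
    sum_nonneg fun i _ => mul_nonneg (hw i) (Real.rpow_nonneg (hf i) p)
  have hq0 : q ≠ 0 := by
    rintro rfl
    rw [div_zero, add_zero, div_eq_one_iff_eq hp0.ne'] at hpq
    exact hp1.ne hpq.symm
  have hqp : q * (1 - p) = -p := by
    field_simp at hpq
    linarith
  have hq : 1 / q = (p - 1) * (1 / p) := by
    field_simp
    linarith
  have key : ∑ i, w i * f i ^ p ≤ (∑ i, w i * f i * g i) ^ p * R ^ (1 - p) :=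
    calc ∑ i, w i * f i ^ p = ∑ i, (w i * f i * g i) ^ p * (w i * g i ^ q) ^ (1 - p) :=
          sum_congr rfl fun i _ =>
            (mul_mul_rpow_mul_mul_rpow_one_sub (hw i) (hf i) (hg i) hqp).symm
      _ ≤ _ := sum_rpow_mul_rpow_le (fun i => mul_nonneg (mul_nonneg (hw i) (hf i)) (hg i).le)
          (fun i => mul_nonneg (hw i) (Real.rpow_nonneg (hg i).le q)) hp0 hp1
  rcases hR.eq_or_lt with hR0 | hRpos
  · have hq_ne : 1 / q ≠ 0 := by rw [hq]; exact mul_ne_zero (by linarith) (by positivity)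
    rw [← hR0, Real.zero_rpow hq_ne, mul_zero]
    exact hS
  calc (∑ i, w i * f i ^ p) ^ (1 / p) * R ^ (1 / q)
      = ((∑ i, w i * f i ^ p) * R ^ (p - 1)) ^ (1 / p) := by
        rw [Real.mul_rpow hT (Real.rpow_nonneg hR _), ← Real.rpow_mul hR, hq]
    _ ≤ ((∑ i, w i * f i * g i) ^ p * R ^ (1 - p) * R ^ (p - 1)) ^ (1 / p) :=
        Real.rpow_le_rpow (mul_nonneg hT (Real.rpow_nonneg hR _))
          (mul_le_mul_of_nonneg_right key (Real.rpow_nonneg hR _)) (by positivity)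
    _ = ∑ i, w i * f i * g i := by
        rw [mul_assoc, ← Real.rpow_add hRpos, sub_add_sub_cancel', sub_self, Real.rpow_zero,
          mul_one, ← Real.rpow_mul hS, mul_one_div_cancel hp0.ne', Real.rpow_one]

lemma Lp_mul_Lq_le_inner_of_lt_one {w f g : ι → ℝ} (hw : ∀ i, 0 ≤ w i)
    (hf : ∀ i, 0 < f i) (hg : ∀ i, 0 < g i) {p q : ℝ} (hp1 : p < 1) (hp0 : p ≠ 0)
    (hpq : 1 / p + 1 / q = 1) :
    (∑ i, w i * f i ^ p) ^ (1 / p) * (∑ i, w i * g i ^ q) ^ (1 / q) ≤ ∑ i, w i * f i * g i := by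
  rcases hp0.lt_or_gt with hneg | hpos
  · have h1q : 1 < 1 / q := by linarith [one_div_neg.mpr hneg]
    have hq0 : 0 < q := one_div_pos.mp (by linarith)
    have := Lp_mul_Lq_le_inner_of_pos_of_lt_one hw (fun i => (hg i).le) hf hq0
      ((one_lt_div hq0).mp h1q) (p := q) (q := p) (by linarith)
    simpa only [mul_comm, mul_left_comm] using this
  · exact Lp_mul_Lq_le_inner_of_pos_of_lt_one hw (fun i => (hf i).le) hg hpos hp1 hpq

end ReverseHolder

section FunctionalCalculus

variable {n : Type*} [Fintype n] [DecidableEq n] {A : Matrix n n ℂ}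

lemma matFun_eq_cfc (hA : A.IsHermitian) (f : ℝ → ℝ) : matFun A f = cfc f A := by
  rw [hA.cfc_eq, IsHermitian.cfc, Unitary.conjStarAlgAut_apply, matFun, dif_pos hA]
  rfl

lemma Matrix.continuousOn_spectrum_real {𝕜 : Type*} [RCLike 𝕜] (f : ℝ → ℝ) (M : Matrix n n 𝕜) :
    ContinuousOn f (spectrum ℝ M) :=
  M.finite_real_spectrum.continuousOn f

lemma Matrix.PosSemidef.nonneg_of_mem_spectrum_real {𝕜 : Type*} [RCLike 𝕜] {M : Matrix n n 𝕜}
    (hM : M.PosSemidef) {x : ℝ} (hx : x ∈ spectrum ℝ M) : 0 ≤ x := by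
  obtain ⟨i, rfl⟩ := hM.1.spectrum_real_eq_range_eigenvalues ▸ hx
  exact hM.eigenvalues_nonneg i

lemma Matrix.PosDef.pos_of_mem_spectrum_real {𝕜 : Type*} [RCLike 𝕜] {M : Matrix n n 𝕜}
    (hM : M.PosDef) {x : ℝ} (hx : x ∈ spectrum ℝ M) : 0 < x := by
  obtain ⟨i, rfl⟩ := hM.1.spectrum_real_eq_range_eigenvalues ▸ hx
  exact hM.eigenvalues_pos i

lemma trace_matFun (hA : A.IsHermitian) (f : ℝ → ℝ) :
    (matFun A f).trace = ∑ i, (f (hA.eigenvalues i) : ℂ) := by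
  rw [matFun, dif_pos hA, trace_mul_cycle, Unitary.coe_star_mul_self, one_mul, trace_diagonal]

lemma isHermitian_mpow (A : Matrix n n ℂ) (r : ℝ) : (mpow A r).IsHermitian := by
  by_cases hA : A.IsHermitian
  · rw [mpow, matFun_eq_cfc hA]
    exact cfc_predicate _ A
  · simp [mpow, matFun, hA]

lemma mpow_mul_mpow (hA : A.PosDef) (r s : ℝ) : mpow A r * mpow A s = mpow A (r + s) := by
  simp only [mpow, matFun_eq_cfc hA.1]
  rw [← cfc_mul _ _ A (continuousOn_spectrum_real _ A) (continuousOn_spectrum_real _ A)]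
  exact cfc_congr fun x hx => (Real.rpow_add (hA.pos_of_mem_spectrum_real hx) r s).symm

lemma isUnit_mpow (hA : A.PosDef) (r : ℝ) : IsUnit (mpow A r) := by
  rw [mpow, matFun_eq_cfc hA.1,
    isUnit_cfc_iff _ _ (continuousOn_spectrum_real _ A) hA.1.isSelfAdjoint]
  exact fun x hx => (Real.rpow_pos_of_pos (hA.pos_of_mem_spectrum_real hx) r).ne'

lemma mAbs_of_posSemidef (hA : A.PosSemidef) : mAbs A = A := by
  have hAA : Aᴴ * A = A ^ 2 := by rw [hA.1.eq, sq]
  rw [mAbs, hAA, mpow, matFun_eq_cfc (hA.1.pow 2), ← cfc_comp_pow _ _ _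
    (Real.continuous_rpow_const (by norm_num)).continuousOn hA.1.isSelfAdjoint]
  conv_rhs => rw [← cfc_id' ℝ A hA.1.isSelfAdjoint]
  refine cfc_congr fun x hx => ?_
  rw [← Real.sqrt_eq_rpow, Real.sqrt_sq (hA.nonneg_of_mem_spectrum_real hx)]

lemma schatten_of_posSemidef (hA : A.PosSemidef) (p : ℝ) :
    schatten p A = (∑ i, hA.1.eigenvalues i ^ p) ^ (1 / p) := by
  rw [schatten, mAbs_of_posSemidef hA, mpow, trace_matFun hA.1, ← Complex.ofReal_sum,
    Complex.ofReal_re]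

lemma Matrix.PosDef.gammaPow {σ X : Matrix n n ℂ} (hσ : σ.PosDef) (hX : X.PosDef) (p : ℝ) :
    (gammaPow σ p X).PosDef := by
  have hS := isUnit_mpow hσ (1 / (2 * p))
  rw [_root_.gammaPow]
  nth_rewrite 1 [← (isHermitian_mpow σ _).eq]
  exact (Matrix.IsUnit.posDef_star_left_conjugate_iff hS).mpr hX

lemma trace_gammaPow_mul_gammaPow {σ : Matrix n n ℂ} (hσ : σ.PosDef) {p q : ℝ}
    (hpq : 1 / p + 1 / q = 1) (X Y : Matrix n n ℂ) :
    (gammaPow σ p X * gammaPow σ q Y).trace =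
      (mpow σ (1 / 2) * X * mpow σ (1 / 2) * Y).trace := by
  have hsplit : ∀ a b : ℝ, 1 / a + 1 / b = 1 →
      mpow σ (1 / 2) = mpow σ (1 / (2 * a)) * mpow σ (1 / (2 * b)) := by
    intro a b hab
    rw [mpow_mul_mpow hσ]
    congr 1
    linear_combination (-1 / 2 : ℝ) * hab
  nth_rewrite 1 [hsplit q p (by linarith)]
  rw [hsplit p q hpq]
  simp only [gammaPow, Matrix.mul_assoc]
  rw [trace_mul_comm (mpow σ (1 / (2 * q)))]
  simp only [Matrix.mul_assoc]

end FunctionalCalculus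

section TraceInequality

variable {n : Type*} [Fintype n] [DecidableEq n]

lemma Matrix.sum_normSq_apply_right {W : Matrix n n ℂ} (hW : W ∈ unitaryGroup n ℂ) (i : n) :
    ∑ j, Complex.normSq (W i j) = 1 := by
  have h := congr_fun₂ (mem_unitaryGroup_iff.mp hW) i i
  rw [mul_apply, one_apply_eq] at h
  exact_mod_cast (Complex.ofReal_sum _ _).trans <| (Finset.sum_congr rfl fun j _ => by
    rw [star_apply, Complex.star_def, Complex.mul_conj]).trans h

lemma Matrix.sum_normSq_apply_left {W : Matrix n n ℂ} (hW : W ∈ unitaryGroup n ℂ) (j : n) :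
    ∑ i, Complex.normSq (W i j) = 1 := by
  simpa only [star_apply, Complex.star_def, Complex.normSq_conj] using
    sum_normSq_apply_right (Unitary.star_mem hW) j

lemma Matrix.re_trace_diagonal_mul_mul_diagonal_mul_star (a b : n → ℝ) (W : Matrix n n ℂ) :
    (diagonal (RCLike.ofReal ∘ a) * W * diagonal (RCLike.ofReal ∘ b) * star W).trace.re =
      ∑ i, ∑ j, Complex.normSq (W i j) * a i * b j := by
  have entry : ∀ i j, (diagonal (RCLike.ofReal ∘ a) * W * diagonal (RCLike.ofReal ∘ b) :
      Matrix n n ℂ) i j * star W j i = ((Complex.normSq (W i j) * a i * b j : ℝ) : ℂ) := by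
    intro i j
    rw [mul_diagonal, diagonal_mul, star_apply, Complex.star_def, Complex.ofReal_mul,
      Complex.ofReal_mul, ← Complex.mul_conj]
    simp only [Function.comp_apply, RCLike.ofReal_eq_complex_ofReal]
    ring
  simp only [trace, diag_apply, mul_apply (N := star W), entry, ← Complex.ofReal_sum,
    Complex.ofReal_re]

lemma Matrix.IsHermitian.re_trace_mul {A B : Matrix n n ℂ} (hA : A.IsHermitian)
    (hB : B.IsHermitian) :
    (A * B).trace.re = ∑ i, ∑ j, Complex.normSq
      ((star (hA.eigenvectorUnitary : Matrix n n ℂ) * hB.eigenvectorUnitary) i j) *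
        hA.eigenvalues i * hB.eigenvalues j := by
  rw [← re_trace_diagonal_mul_mul_diagonal_mul_star]
  conv_lhs => rw [hA.spectral_theorem, hB.spectral_theorem]
  simp only [Unitary.conjStarAlgAut_apply, star_mul, star_star, Matrix.mul_assoc]
  rw [trace_mul_comm]
  simp only [Matrix.mul_assoc]

lemma schatten_mul_schatten_le_re_trace_mul {A B : Matrix n n ℂ} (hA : A.PosDef) (hB : B.PosDef)
    {p q : ℝ} (hp1 : p < 1) (hp0 : p ≠ 0) (hpq : 1 / p + 1 / q = 1) :
    schatten p A * schatten q B ≤ (A * B).trace.re := by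
  set W := star (hA.1.eigenvectorUnitary : Matrix n n ℂ) * hB.1.eigenvectorUnitary
  have hW : W ∈ unitaryGroup n ℂ :=
    mul_mem (Unitary.star_mem hA.1.eigenvectorUnitary.2) hB.1.eigenvectorUnitary.2
  have := Lp_mul_Lq_le_inner_of_lt_one (ι := n × n)
    (w := fun ij => Complex.normSq (W ij.1 ij.2))
    (f := fun ij => hA.1.eigenvalues ij.1) (g := fun ij => hB.1.eigenvalues ij.2)
    (fun _ => Complex.normSq_nonneg _) (fun ij => hA.eigenvalues_pos ij.1)
    (fun ij => hB.eigenvalues_pos ij.2) hp1 hp0 hpq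
  simp only [Fintype.sum_prod_type] at this
  rw [schatten_of_posSemidef hA.posSemidef, schatten_of_posSemidef hB.posSemidef,
    hA.1.re_trace_mul hB.1]
  convert this using 3
  · simp only [← Finset.sum_mul, sum_normSq_apply_right hW, one_mul]
  · rw [Finset.sum_comm]
    simp only [← Finset.sum_mul, sum_normSq_apply_left hW, one_mul]

end TraceInequality

theorem reverse_holder_weighted_general {n : Type*} [Fintype n] [DecidableEq n]
    (σ : Matrix n n ℂ) (hσ : σ.PosDef)
    (X Y : Matrix n n ℂ) (hX : X.PosDef) (hY : Y.PosDef)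
    (p phat : ℝ) (hp : p < 1) (hp0 : p ≠ 0) (hconj : 1/p + 1/phat = 1) :
    wnorm σ p X * wnorm σ phat Y ≤
      ((mpow σ (1/2) * X * mpow σ (1/2) * Y).trace).re := by
  rw [← trace_gammaPow_mul_gammaPow hσ hconj]
  exact schatten_mul_schatten_le_re_trace_mul (hσ.gammaPow hX p) (hσ.gammaPow hY phat)
    hp hp0 hconj

/-- Weighted reverse Hölder inequality: for a positive definite density matrix `σ`,
positive definite `X, Y` and `p < 1` with Hölder conjugate `p̂`,
`⟨X,Y⟩_σ = tr(σ^{1/2} X σ^{1/2} Y) ≥ ‖X‖_{p,σ} ‖Y‖_{p̂,σ}`. -/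
theorem reverse_holder_weighted {n : Type*} [Fintype n] [DecidableEq n]
    (σ : Matrix n n ℂ) (hσ : σ.PosDef) (hσ1 : σ.trace = 1)
    (X Y : Matrix n n ℂ) (hX : X.PosDef) (hY : Y.PosDef)
    (p phat : ℝ) (hp : p < 1) (hp0 : p ≠ 0) (hconj : 1/p + 1/phat = 1) :
    wnorm σ p X * wnorm σ phat Y ≤
      ((mpow σ (1/2) * X * mpow σ (1/2) * Y).trace).re :=
  reverse_holder_weighted_general σ hσ X Y hX hY p phat hp hp0 hconj
end

section
/- For every positive definite matrix X and every nonzero real p, the entropy function Ent_{p,σ}(X) is non-negative. -/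
open Matrix BigOperators
open scoped ComplexOrder

/-!
Put `ρ = (Γ_σ^{1/p} X)^p`. It is positive definite, `‖X‖_{p,σ}^p = tr ρ`, and
`Ent_{p,σ}(X) = D(ρ‖σ) - tr ρ · log tr ρ`, so the claim is Klein's inequality
`D(ρ‖σ) ≥ tr ρ · log (tr ρ / tr σ)` for `tr σ = 1`. In eigenbases `(u_i)` of `ρ` and `(v_j)` of `σ`
with eigenvalues `ν_i`, `μ_j` one has `tr (ρ log σ) = ∑ P_ij ν_i log μ_j` with the doubly stochastic
`P_ij = |⟨u_i, v_j⟩|²`; averaging the scalar inequality `ν - c μ ≤ ν log (ν / (c μ))` against `P`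
with `c = tr ρ / tr σ` gives Klein's inequality.
-/

lemma Real.sub_le_mul_log_div {a b : ℝ} (ha : 0 < a) (hb : 0 < b) :
    a - b ≤ a * Real.log (a / b) := by
  have h := Real.one_sub_inv_le_log_of_pos (div_pos ha hb)
  rw [inv_div] at h
  calc a - b = a * (1 - b / a) := by field_simp
    _ ≤ a * Real.log (a / b) := mul_le_mul_of_nonneg_left h ha.le

open scoped MatrixOrder

namespace Matrix

lemma sum_mul_log_div_le_of_mem_doublyStochastic {ι : Type*} [Fintype ι] [DecidableEq ι]
    {P : Matrix ι ι ℝ} (hP : P ∈ doublyStochastic ℝ ι) {ν μ : ι → ℝ} (hν : ∀ i, 0 < ν i)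
    (hμ : ∀ j, 0 < μ j) :
    (∑ i, ν i) * Real.log ((∑ i, ν i) / ∑ j, μ j) ≤
      ∑ i, ν i * Real.log (ν i) - ∑ i, ∑ j, P i j * ν i * Real.log (μ j) := by
  rcases isEmpty_or_nonempty ι with hι | hι
  · simp
  set T := ∑ i, ν i
  set S := ∑ j, μ j
  have hS : 0 < S := Finset.sum_pos (fun j _ => hμ j) Finset.univ_nonempty
  have hc : 0 < T / S := div_pos (Finset.sum_pos (fun i _ => hν i) Finset.univ_nonempty) hS
  have hpoint : ∀ i j, P i j * (ν i - T / S * μ j) ≤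
      P i j * (ν i * Real.log (ν i) - ν i * Real.log (μ j) - ν i * Real.log (T / S)) := by
    intro i j
    refine mul_le_mul_of_nonneg_left ?_ (nonneg_of_mem_doublyStochastic hP)
    have h := Real.sub_le_mul_log_div (hν i) (mul_pos hc (hμ j))
    rw [Real.log_div (hν i).ne' (mul_pos hc (hμ j)).ne', Real.log_mul hc.ne' (hμ j).ne'] at h
    linarith
  have hsum := Finset.sum_le_sum (s := Finset.univ) fun i _ =>
    Finset.sum_le_sum (s := Finset.univ) fun j _ => hpoint i j
  have hrow : ∀ (i : ι) (x : ℝ), ∑ j, P i j * x = x := fun i x => by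
    rw [← Finset.sum_mul, sum_row_of_mem_doublyStochastic hP, one_mul]
  have hcol : ∀ (j : ι) (x : ℝ), ∑ i, P i j * x = x := fun j x => by
    rw [← Finset.sum_mul, sum_col_of_mem_doublyStochastic hP, one_mul]
  have hmass : ∑ i, ∑ j, P i j * (T / S) * μ j = T := by
    rw [Finset.sum_comm]
    simp only [mul_assoc, hcol, ← Finset.mul_sum]
    exact div_mul_cancel₀ T hS.ne'
  simp only [mul_sub, Finset.sum_sub_distrib, hrow, ← Finset.sum_mul, ← mul_assoc] at hsum
  rw [hmass] at hsum
  linarith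

variable {n : Type*} [Fintype n] [DecidableEq n]

lemma matFun_eq_cfc {A : Matrix n n ℂ} (hA : A.IsHermitian) (f : ℝ → ℝ) :
    matFun A f = cfc f A := by
  rw [matFun, dif_pos hA, hA.cfc_eq, IsHermitian.cfc, Unitary.conjStarAlgAut_apply]
  rfl

lemma IsHermitian.matFun_id {A : Matrix n n ℂ} (hA : A.IsHermitian) : matFun A id = A := by
  rw [matFun_eq_cfc hA, cfc_id ℝ A]

lemma posDef_mpow {A : Matrix n n ℂ} (hA : A.PosDef) (r : ℝ) : (mpow A r).PosDef := by
  rw [mpow, matFun_eq_cfc hA.1]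
  refine ((cfc_isStrictlyPositive_iff _ A (A.finite_real_spectrum.continuousOn _)).2
    fun x hx => Real.rpow_pos_of_pos ?_ r).posDef
  exact (StarOrderedRing.isStrictlyPositive_iff_spectrum_pos A).1 hA.isStrictlyPositive x hx

lemma posDef_gammaPow {σ X : Matrix n n ℂ} (hσ : σ.PosDef) (hX : X.PosDef) (p : ℝ) :
    (gammaPow σ p X).PosDef := by
  have hB := posDef_mpow hσ (1 / (2 * p))
  have h := (IsUnit.posDef_star_left_conjugate_iff hB.isUnit).2 hX
  rwa [star_eq_conjTranspose, hB.1.eq] at h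

lemma mAbs_of_posDef {A : Matrix n n ℂ} (hA : A.PosDef) : mAbs A = A := by
  have hsq : Aᴴ * A = A ^ 2 := by rw [sq, hA.1.eq]
  rw [mAbs, mpow, matFun_eq_cfc (isHermitian_conjTranspose_mul_self A), hsq,
    ← cfc_comp_pow (hf := (Real.continuous_rpow_const (by norm_num)).continuousOn)]
  conv_rhs => rw [← cfc_id' ℝ A]
  refine cfc_congr fun x hx => ?_
  have hx0 : 0 ≤ x := ((StarOrderedRing.isStrictlyPositive_iff_spectrum_pos A).1
    hA.isStrictlyPositive x hx).le
  rw [← Real.sqrt_eq_rpow, Real.sqrt_sq hx0]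

lemma map_normSq_mem_doublyStochastic {N : Matrix n n ℂ} (hN : N ∈ unitaryGroup n ℂ) :
    N.map Complex.normSq ∈ doublyStochastic ℝ n := by
  refine mem_doublyStochastic_iff_sum.2
    ⟨fun i j => Complex.normSq_nonneg _, fun i => ?_, fun j => ?_⟩
  · have h := congr_fun₂ (mem_unitaryGroup_iff.1 hN) i i
    simp only [mul_apply, one_apply_eq, star_apply, Complex.star_def, Complex.mul_conj] at h
    exact_mod_cast h
  · have h := congr_fun₂ (mem_unitaryGroup_iff'.1 hN) j j
    simp only [mul_apply, one_apply_eq, star_apply, Complex.star_def, mul_comm _ (N _ j),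
      Complex.mul_conj] at h
    exact_mod_cast h

/-- `eigenOverlap hA hB i j = |⟨u_i, v_j⟩|²` for the eigenbases `(u_i)` of `A`, `(v_j)` of `B`. -/
noncomputable def eigenOverlap {A B : Matrix n n ℂ} (hA : A.IsHermitian) (hB : B.IsHermitian) :
    Matrix n n ℝ :=
  (star (hA.eigenvectorUnitary : Matrix n n ℂ) * hB.eigenvectorUnitary).map Complex.normSq

lemma eigenOverlap_mem_doublyStochastic {A B : Matrix n n ℂ} (hA : A.IsHermitian)
    (hB : B.IsHermitian) : eigenOverlap hA hB ∈ doublyStochastic ℝ n :=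
  map_normSq_mem_doublyStochastic
    (mul_mem (Unitary.star_mem hA.eigenvectorUnitary.2) hB.eigenvectorUnitary.2)

lemma eigenOverlap_self {A : Matrix n n ℂ} (hA : A.IsHermitian) : eigenOverlap hA hA = 1 := by
  ext i j
  rw [eigenOverlap, UnitaryGroup.star_mul_self, map_apply, one_apply, one_apply]
  split_ifs <;> simp

lemma trace_diagonal_mul_mul_diagonal_mul_conjTranspose (a b : n → ℂ) (N : Matrix n n ℂ) :
    (diagonal a * N * diagonal b * Nᴴ).trace =
      ∑ i, ∑ j, a i * b j * (Complex.normSq (N i j) : ℂ) := by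
  refine Finset.sum_congr rfl fun i _ => ?_
  rw [diag_apply, mul_apply]
  refine Finset.sum_congr rfl fun j _ => ?_
  rw [mul_diagonal, diagonal_mul, conjTranspose_apply, Complex.star_def, ← Complex.mul_conj]
  ring

lemma re_trace_matFun_mul_matFun {A B : Matrix n n ℂ} (hA : A.IsHermitian) (hB : B.IsHermitian)
    (f g : ℝ → ℝ) :
    (matFun A f * matFun B g).trace.re =
      ∑ i, ∑ j, eigenOverlap hA hB i j * f (hA.eigenvalues i) * g (hB.eigenvalues j) := by
  rw [matFun, matFun, dif_pos hA, dif_pos hB]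
  set U : Matrix n n ℂ := (hA.eigenvectorUnitary : Matrix n n ℂ)
  set V : Matrix n n ℂ := (hB.eigenvectorUnitary : Matrix n n ℂ)
  have hconj : (star U * V)ᴴ = star V * U := by
    rw [conjTranspose_mul, ← star_eq_conjTranspose, ← star_eq_conjTranspose, star_star]
  -- by cyclicity, `tr (U Dₐ U⋆ V D_b V⋆) = tr (Dₐ N D_b N⋆)` with `N = U⋆ V`
  simp only [mul_assoc]
  rw [trace_mul_comm]
  simp only [mul_assoc]
  rw [← hconj, ← mul_assoc (star U) V, ← mul_assoc, ← mul_assoc,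
    trace_diagonal_mul_mul_diagonal_mul_conjTranspose]
  simp only [← Complex.ofReal_mul, ← Complex.ofReal_sum, Complex.ofReal_re]
  refine Finset.sum_congr rfl fun i _ => Finset.sum_congr rfl fun j _ => ?_
  rw [eigenOverlap, map_apply]
  ring

lemma re_trace_mul_matFun {A B : Matrix n n ℂ} (hA : A.IsHermitian) (hB : B.IsHermitian)
    (g : ℝ → ℝ) :
    (A * matFun B g).trace.re =
      ∑ i, ∑ j, eigenOverlap hA hB i j * hA.eigenvalues i * g (hB.eigenvalues j) := by
  conv_lhs => rw [← hA.matFun_id]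
  exact re_trace_matFun_mul_matFun hA hB id g

theorem mul_log_div_le_relEnt {ρ σ : Matrix n n ℂ} (hρ : ρ.PosDef) (hσ : σ.PosDef) :
    ρ.trace.re * Real.log (ρ.trace.re / σ.trace.re) ≤ relEnt ρ σ := by
  have htrace : ∀ {A : Matrix n n ℂ} (hA : A.IsHermitian), A.trace.re = ∑ i, hA.eigenvalues i :=
    fun hA => by simp [hA.trace_eq_sum_eigenvalues]
  have hself : ∑ i, ∑ j, (1 : Matrix n n ℝ) i j * hρ.1.eigenvalues i *
      Real.log (hρ.1.eigenvalues j) = ∑ i, hρ.1.eigenvalues i * Real.log (hρ.1.eigenvalues i) := by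
    simp [one_apply]
  rw [relEnt, Complex.sub_re, mlog, mlog, re_trace_mul_matFun hρ.1 hρ.1,
    re_trace_mul_matFun hρ.1 hσ.1, eigenOverlap_self, hself, htrace hρ.1, htrace hσ.1]
  exact sum_mul_log_div_le_of_mem_doublyStochastic (eigenOverlap_mem_doublyStochastic hρ.1 hσ.1)
    hρ.eigenvalues_pos hσ.eigenvalues_pos

end Matrix

/-- The entropy function `Ent_{p,σ}(X)` is non-negative for positive definite `X`
and nonzero real `p`. -/
theorem ent_nonneg {n : Type*} [Fintype n] [DecidableEq n]
    (σ : Matrix n n ℂ) (hσ : σ.PosDef) (hσ1 : σ.trace = 1)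
    (p : ℝ) (hp : p ≠ 0) (X : Matrix n n ℂ) (hX : X.PosDef) :
    0 ≤ Ent σ p X := by
  have hΓ := posDef_gammaPow hσ hX p
  have hρ := posDef_mpow hΓ p
  have hnorm : wnorm σ p X ^ p = (mpow (gammaPow σ p X) p).trace.re := by
    rw [wnorm, schatten, mAbs_of_posDef hΓ,
      ← Real.rpow_mul (Complex.nonneg_iff.1 hρ.posSemidef.trace_nonneg).1, one_div_mul_cancel hp,
      Real.rpow_one]
  have hklein := mul_log_div_le_relEnt hρ hσ
  rw [hσ1, Complex.one_re, div_one, relEnt, Complex.sub_re] at hklein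
  rw [Ent, hnorm]
  linarith
end

section
/- Let L be a linear superoperator on matrices that is self-adjoint with respect to the inner product ⟨X,Y⟩_{1,σ} := tr(σ X† Y) and satisfies L(Y†) = L(Y)†. Then L commutes with the modular operator Δ_σ(X) := σ X σ^{-1}, i.e., Δ_σ ∘ L = L ∘ Δ_σ. -/
open Matrix BigOperators
open scoped ComplexOrder

namespace Matrix

variable {n R : Type*} [Fintype n] [CommRing R]

theorem trace_mul_map_symm_of_conjTranspose [StarRing R] {σ : Matrix n n R}
    {L : Matrix n n R → Matrix n n R} (hherm : ∀ X, L Xᴴ = (L X)ᴴ)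
    (hsa : ∀ X Y, (σ * Xᴴ * L Y).trace = (σ * (L X)ᴴ * Y).trace) (X Y : Matrix n n R) :
    (σ * X * L Y).trace = (σ * L X * Y).trace := by
  simpa [hherm] using hsa Xᴴ Y

variable [DecidableEq n] {σ : Matrix n n R}

theorem trace_mul_inv_mul_mul_self (hσ : IsUnit σ) (X Y : Matrix n n R) :
    (σ * (σ⁻¹ * X * σ) * Y).trace = (σ * Y * X).trace := by
  rw [Matrix.mul_assoc σ⁻¹, mul_nonsing_inv_cancel_left _ _ ((isUnit_iff_isUnit_det σ).mp hσ),
    Matrix.mul_assoc, trace_mul_comm, Matrix.mul_assoc]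

/-- The form `B(X, Y) = tr(σ X Y)` is nondegenerate and satisfies `B(σ⁻¹ X σ, Y) = B(Y, X)`. -/
theorem map_inv_mul_mul_self_of_trace_symm (hσ : IsUnit σ) {L : Matrix n n R → Matrix n n R}
    (hL : ∀ X Y, (σ * X * L Y).trace = (σ * L X * Y).trace) (W : Matrix n n R) :
    L (σ⁻¹ * W * σ) = σ⁻¹ * L W * σ :=
  hσ.mul_left_cancel <| ext_iff_trace_mul_right.mpr fun Y ↦
    calc (σ * L (σ⁻¹ * W * σ) * Y).trace
        = (σ * (σ⁻¹ * W * σ) * L Y).trace := (hL _ Y).symm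
      _ = (σ * L Y * W).trace := trace_mul_inv_mul_mul_self hσ W (L Y)
      _ = (σ * Y * L W).trace := (hL Y W).symm
      _ = (σ * (σ⁻¹ * L W * σ) * Y).trace := (trace_mul_inv_mul_mul_self hσ (L W) Y).symm

theorem mul_map_mul_inv_of_trace_symm (hσ : IsUnit σ) {L : Matrix n n R → Matrix n n R}
    (hL : ∀ X Y, (σ * X * L Y).trace = (σ * L X * Y).trace) (X : Matrix n n R) :
    σ * L X * σ⁻¹ = L (σ * X * σ⁻¹) := by
  have hdet := (isUnit_iff_isUnit_det σ).mp hσ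
  simpa [Matrix.mul_assoc, hdet] using
    congrArg (σ * · * σ⁻¹) (map_inv_mul_mul_self_of_trace_symm hσ hL (σ * X * σ⁻¹))

end Matrix

theorem modular_commute_general {n : Type*} [Fintype n] [DecidableEq n]
    (σ : Matrix n n ℂ) (hσ : σ.PosDef)
    (L : Matrix n n ℂ →ₗ[ℂ] Matrix n n ℂ)
    (hherm : ∀ X, L (Xᴴ) = (L X)ᴴ)
    (hsa : ∀ X Y, (σ * Xᴴ * L Y).trace = (σ * (L X)ᴴ * Y).trace) :
    ∀ X, σ * L X * σ⁻¹ = L (σ * X * σ⁻¹) :=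
  Matrix.mul_map_mul_inv_of_trace_symm hσ.isUnit
    (Matrix.trace_mul_map_symm_of_conjTranspose hherm hsa)

/-- A hermitian-preserving superoperator that is self-adjoint with respect to the
inner product `⟨X,Y⟩_{1,σ} = tr(σ X† Y)` commutes with the modular operator
`Δ_σ(X) = σ X σ⁻¹`. -/
theorem modular_commute {n : Type*} [Fintype n] [DecidableEq n]
    (σ : Matrix n n ℂ) (hσ : σ.PosDef) (hσ1 : σ.trace = 1)
    (L : Matrix n n ℂ →ₗ[ℂ] Matrix n n ℂ)
    (hherm : ∀ X, L (Xᴴ) = (L X)ᴴ)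
    (hsa : ∀ X Y, (σ * Xᴴ * L Y).trace = (σ * (L X)ᴴ * Y).trace) :
    ∀ X, σ * L X * σ⁻¹ = L (σ * X * σ⁻¹) :=
  modular_commute_general σ hσ L hherm hsa
end

section
/- If a hermitian-preserving superoperator L is self-adjoint with respect to ⟨X,Y⟩_{1,σ} := tr(σ X† Y), then L is also self-adjoint with respect to the KMS inner product ⟨X,Y⟩_σ := tr(σ^{1/2} X† σ^{1/2} Y). -/
open Matrix BigOperators
open scoped ComplexOrder

/-!
Diagonalize `σ = U diag(d) U†`. Hermiticity preservation turns GNS self-adjointness of `L` into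
symmetry of `L` for the bilinear form `(A, B) ↦ tr(σ A B)`, and by cyclicity of the trace also
for `(A, B) ↦ tr(A σ B)`. Evaluated on matrix units `E_ab`, `E_rs` of the eigenbasis these two
symmetries read `d_r ℓ = d_b ℓ'` and `d_s ℓ = d_a ℓ'` with `ℓ = ⟨s|L(E_ab)|r⟩`,
`ℓ' = ⟨b|L(E_rs)|a⟩`. As the `d_i` are positive this forces `√(d_r d_s) ℓ = √(d_a d_b) ℓ'`,
which is symmetry of `L` for `(A, B) ↦ tr(σ^{1/2} A σ^{1/2} B)`, i.e. KMS self-adjointness.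
-/
theorem LinearMap.IsSelfAdjoint.flip {R M M₃ : Type*} [CommSemiring R] [AddCommMonoid M]
    [Module R M] [AddCommMonoid M₃] [Module R M₃] {B : M →ₗ[R] M →ₗ[R] M₃} {f : M → M}
    (h : B.IsSelfAdjoint f) : B.flip.IsSelfAdjoint f :=
  fun x y => (h y x).symm

theorem Complex.mul_mul_eq_of_sq_mul_eq {a b c e : ℝ} (ha : 0 < a) (hb : 0 < b) (hc : 0 < c)
    (he : 0 < e) {z w : ℂ} (h₁ : (a : ℂ) ^ 2 * z = c ^ 2 * w) (h₂ : (b : ℂ) ^ 2 * z = e ^ 2 * w) :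
    (a : ℂ) * b * z = c * e * w := by
  have hpos : ((b * c + a * e : ℝ) : ℂ) ≠ 0 := by
    exact_mod_cast (by positivity : 0 < b * c + a * e).ne'
  have hw : ((b : ℂ) * c - a * e) * w = 0 := by
    refine (mul_eq_zero.1 ?_).resolve_left hpos
    push_cast
    linear_combination a ^ 2 * h₂ - b ^ 2 * h₁
  apply mul_left_cancel₀ (Complex.ofReal_ne_zero.2 ha.ne')
  linear_combination b * h₁ + c * hw

namespace Matrix

variable {n R : Type*} [Fintype n]

section CommSemiring

variable [CommSemiring R]

/-- The GNS and KMS inner products are `(X, Y) ↦ sandwichForm σ 1 Xᴴ Y` and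
`(X, Y) ↦ sandwichForm σ^{1/2} σ^{1/2} Xᴴ Y`. -/
def sandwichForm (P Q : Matrix n n R) : LinearMap.BilinForm R (Matrix n n R) :=
  LinearMap.mk₂ R (fun A B => (P * A * Q * B).trace)
    (fun A A' B => by simp only [Matrix.mul_add, Matrix.add_mul, trace_add])
    (fun c A B => by simp only [Matrix.mul_smul, Matrix.smul_mul, trace_smul])
    (fun A B B' => by simp only [Matrix.mul_add, trace_add])
    (fun c A B => by simp only [Matrix.mul_smul, trace_smul])

@[simp]
theorem sandwichForm_apply (P Q A B : Matrix n n R) :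
    sandwichForm P Q A B = (P * A * Q * B).trace :=
  rfl

theorem sandwichForm_flip (P Q : Matrix n n R) :
    LinearMap.flip (sandwichForm P Q) = sandwichForm Q P := by
  ext A B
  change (P * B * Q * A).trace = (Q * A * P * B).trace
  rw [Matrix.mul_assoc (P * B), trace_mul_comm, ← Matrix.mul_assoc]

variable [DecidableEq n]

theorem diagonal_mul_single_mul_diagonal (p q : n → R) (a b : n) :
    diagonal p * single a b (1 : R) * diagonal q = single a b (p a * q b) := by
  ext i j
  rw [mul_diagonal, diagonal_mul]
  by_cases hi : a = i <;> by_cases hj : b = j <;> simp [single, hi, hj]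

theorem sandwichForm_diagonal_single_left (p q : n → R) (a b : n) (B : Matrix n n R) :
    sandwichForm (diagonal p) (diagonal q) (single a b 1) B = p a * q b * B b a := by
  rw [sandwichForm_apply, diagonal_mul_single_mul_diagonal, trace_single_mul, smul_eq_mul]

theorem sandwichForm_diagonal_single_right (p q : n → R) (A : Matrix n n R) (a b : n) :
    sandwichForm (diagonal p) (diagonal q) A (single a b 1) = q a * p b * A b a := by
  rw [← sandwichForm_flip]
  exact sandwichForm_diagonal_single_left q p a b A

end CommSemiring

section StarRing

variable [CommRing R] [StarRing R]

theorem isSelfAdjoint_sandwichForm_iff {L : Matrix n n R → Matrix n n R}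
    (hL : ∀ X, L Xᴴ = (L X)ᴴ) (P Q : Matrix n n R) :
    (sandwichForm P Q).IsSelfAdjoint L ↔
      ∀ X Y, (P * Xᴴ * Q * L Y).trace = (P * (L X)ᴴ * Q * Y).trace := by
  refine ⟨fun h X Y => ?_, fun h A B => ?_⟩
  · rw [← hL]
    exact (h Xᴴ Y).symm
  · simpa [hL] using (h Aᴴ B).symm

variable [DecidableEq n]

theorem trace_conjStarAlgAut (U : unitary (Matrix n n R)) (A : Matrix n n R) :
    (Unitary.conjStarAlgAut R _ U A).trace = A.trace := by
  rw [Unitary.conjStarAlgAut_apply, trace_mul_cycle, Unitary.coe_star_mul_self, Matrix.one_mul]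

theorem sandwichForm_conjStarAlgAut (U : unitary (Matrix n n R)) (P Q A B : Matrix n n R) :
    sandwichForm (Unitary.conjStarAlgAut R _ U P) (Unitary.conjStarAlgAut R _ U Q)
      (Unitary.conjStarAlgAut R _ U A) (Unitary.conjStarAlgAut R _ U B) =
      sandwichForm P Q A B := by
  simp only [sandwichForm_apply, ← map_mul, trace_conjStarAlgAut]

theorem isSelfAdjoint_sandwichForm_conjStarAlgAut_iff (U : unitary (Matrix n n R))
    {L L' : Matrix n n R → Matrix n n R}
    (hL : ∀ A, Unitary.conjStarAlgAut R _ U (L' A) = L (Unitary.conjStarAlgAut R _ U A))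
    (P Q : Matrix n n R) :
    (sandwichForm (Unitary.conjStarAlgAut R _ U P)
      (Unitary.conjStarAlgAut R _ U Q)).IsSelfAdjoint L ↔
      (sandwichForm P Q).IsSelfAdjoint L' := by
  refine ⟨fun h A B => ?_, fun h A B => ?_⟩
  · rw [← sandwichForm_conjStarAlgAut U P Q, ← sandwichForm_conjStarAlgAut U P Q A, hL, hL]
    exact h _ _
  · have h' := h ((Unitary.conjStarAlgAut R _ U).symm A) ((Unitary.conjStarAlgAut R _ U).symm B)
    rwa [← sandwichForm_conjStarAlgAut U, ← sandwichForm_conjStarAlgAut U P Q, hL, hL,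
      StarAlgEquiv.apply_symm_apply, StarAlgEquiv.apply_symm_apply] at h'

end StarRing

theorem isSelfAdjoint_sandwichForm_diagonal_of_sq [DecidableEq n] {e : n → ℝ}
    (he : ∀ i, 0 < e i) {M : Module.End ℂ (Matrix n n ℂ)}
    (h : (sandwichForm (diagonal fun i => (e i : ℂ) ^ 2) 1).IsSelfAdjoint M) :
    (sandwichForm (diagonal fun i => (e i : ℂ)) (diagonal fun i => (e i : ℂ))).IsSelfAdjoint M := by
  have h' := h.flip
  rw [sandwichForm_flip] at h'
  rw [← diagonal_one] at h h'
  rw [LinearMap.IsSelfAdjoint, LinearMap.isAdjointPair_iff_comp_eq_compl₂]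
  refine LinearMap.ext_basis (stdBasis ℂ n n) (stdBasis ℂ n n) fun ⟨a, b⟩ ⟨r, s⟩ => ?_
  have h₁ := h' (single a b 1) (single r s 1)
  have h₂ := h (single a b 1) (single r s 1)
  simp only [LinearMap.comp_apply, LinearMap.compl₂_apply, stdBasis_eq_single,
    sandwichForm_diagonal_single_left, sandwichForm_diagonal_single_right, one_mul,
    mul_one] at h₁ h₂ ⊢
  linear_combination Complex.mul_mul_eq_of_sq_mul_eq (he r) (he s) (he b) (he a) h₁ h₂

end Matrix

theorem kms_selfadjoint_general {n : Type*} [Fintype n] [DecidableEq n]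
    (σ : Matrix n n ℂ) (hσ : σ.PosDef)
    (L : Matrix n n ℂ →ₗ[ℂ] Matrix n n ℂ)
    (hherm : ∀ X, L (Xᴴ) = (L X)ᴴ)
    (hsa : ∀ X Y, (σ * Xᴴ * L Y).trace = (σ * (L X)ᴴ * Y).trace) :
    ∀ X Y, (mpow σ (1/2) * Xᴴ * mpow σ (1/2) * L Y).trace =
      (mpow σ (1/2) * (L X)ᴴ * mpow σ (1/2) * Y).trace := by
  set Φ := Unitary.conjStarAlgAut ℂ _ hσ.1.eigenvectorUnitary
  set e : n → ℝ := fun i => √(hσ.1.eigenvalues i)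
  have he : ∀ i, 0 < e i := fun i => Real.sqrt_pos.2 (hσ.eigenvalues_pos i)
  have hσ_eq : σ = Φ (diagonal fun i => (e i : ℂ) ^ 2) := by
    refine hσ.1.spectral_theorem.trans (congrArg (Φ ∘ diagonal) (funext fun i => ?_))
    simp [e, ← Complex.ofReal_pow, Real.sq_sqrt (hσ.eigenvalues_pos i).le]
  have hsqrt_eq : mpow σ (1/2) = Φ (diagonal fun i => (e i : ℂ)) := by
    simp [mpow, matFun, dif_pos hσ.1, Φ, e, Real.sqrt_eq_rpow]
  let L' := Φ.symm.toAlgEquiv.toLinearMap ∘ₗ L ∘ₗ Φ.toAlgEquiv.toLinearMap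
  have hL' : ∀ A, Φ (L' A) = L (Φ A) := fun A => Φ.apply_symm_apply _
  have hGNS : (sandwichForm σ 1).IsSelfAdjoint L :=
    (isSelfAdjoint_sandwichForm_iff hherm _ _).2 (by simpa using hsa)
  rw [hσ_eq, ← map_one Φ, isSelfAdjoint_sandwichForm_conjStarAlgAut_iff _ hL'] at hGNS
  have hKMS := (isSelfAdjoint_sandwichForm_conjStarAlgAut_iff _ hL' _ _).2
    (isSelfAdjoint_sandwichForm_diagonal_of_sq he hGNS)
  rw [← hsqrt_eq] at hKMS
  exact (isSelfAdjoint_sandwichForm_iff hherm _ _).1 hKMS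

/-- A hermitian-preserving superoperator that is self-adjoint with respect to
`⟨X,Y⟩_{1,σ} = tr(σ X† Y)` is also self-adjoint with respect to the KMS inner
product `⟨X,Y⟩_σ = tr(σ^{1/2} X† σ^{1/2} Y)`. -/
theorem kms_selfadjoint {n : Type*} [Fintype n] [DecidableEq n]
    (σ : Matrix n n ℂ) (hσ : σ.PosDef) (hσ1 : σ.trace = 1)
    (L : Matrix n n ℂ →ₗ[ℂ] Matrix n n ℂ)
    (hherm : ∀ X, L (Xᴴ) = (L X)ᴴ)
    (hsa : ∀ X Y, (σ * Xᴴ * L Y).trace = (σ * (L X)ᴴ * Y).trace) :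
    ∀ X Y, (mpow σ (1/2) * Xᴴ * mpow σ (1/2) * L Y).trace =
      (mpow σ (1/2) * (L X)ᴴ * mpow σ (1/2) * Y).trace :=
  kms_selfadjoint_general σ hσ L hherm hsa
end

section
/- Let Φ be a completely positive unital map on B(H) commuting with Δ_σ(X) = σ X σ^{-1} for a positive definite density matrix σ. Then there exist operators R_k ∈ B(H) and scalars ω_k ≥ 0 such that σ R_k = ω_k R_k σ, Φ(X) = Σ_k R_k X R_k† for all X, and Σ_k R_k R_k† = I. -/
open Matrix BigOperators
open scoped ComplexOrder

/-- The Choi matrix of a superoperator. -/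
noncomputable def choi {n : Type*} [Fintype n] [DecidableEq n]
    (Φ : Matrix n n ℂ →ₗ[ℂ] Matrix n n ℂ) : Matrix (n × n) (n × n) ℂ :=
  Matrix.of fun p q => Φ (Matrix.single p.1 q.1 1) p.2 q.2

/-!
By `Δ_σ`-covariance, the Choi matrix `C` of `Φ` commutes with `D = σ⁻ᵀ ⊗ σ`, hence so does `√C`.
With `U` a unitary diagonalising `D`, the factor `T = √C U` of `C = T Tᴴ` has eigenvectors of `D`
as columns. Reshaped into matrices, these columns are Kraus operators `R_k` of `Φ`; the eigenvalue
equation `D t_k = ω_k t_k` reads `σ R_k σ⁻¹ = ω_k R_k`, with `ω_k ≥ 0` because `D` is positive,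
and `Σ R_k R_kᴴ = Φ 1 = 1`.
-/

open Kronecker
open scoped MatrixOrder

namespace Matrix

variable {𝕜 m : Type*} [RCLike 𝕜] [Fintype m] [DecidableEq m]

theorem IsHermitian.mul_eigenvectorUnitary {D : Matrix m m 𝕜} (hD : D.IsHermitian) :
    D * (hD.eigenvectorUnitary : Matrix m m 𝕜) =
      (hD.eigenvectorUnitary : Matrix m m 𝕜) * diagonal (fun k => (hD.eigenvalues k : 𝕜)) := by
  ext i j
  rw [mul_diagonal, mul_apply, mul_comm]
  simpa [mulVec, dotProduct, RCLike.real_smul_eq_coe_mul] using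
    congrFun (hD.mulVec_eigenvectorBasis j) i

theorem PosSemidef.exists_eq_mul_conjTranspose_of_commute {C D : Matrix m m 𝕜}
    (hC : C.PosSemidef) (hD : D.IsHermitian) (hDC : Commute D C) :
    ∃ T : Matrix m m 𝕜, C = T * Tᴴ ∧
      D * T = T * diagonal (fun k => (hD.eigenvalues k : 𝕜)) := by
  have hsqrt_comm : Commute D (CFC.sqrt C) := by
    rw [CFC.sqrt_eq_cfc]
    exact (hDC.symm.cfc_nnreal _).symm
  have hsqrt_star : (CFC.sqrt C)ᴴ = CFC.sqrt C := (CFC.sqrt_nonneg C).isSelfAdjoint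
  refine ⟨CFC.sqrt C * hD.eigenvectorUnitary, ?_, ?_⟩
  · rw [conjTranspose_mul, hsqrt_star, Matrix.mul_assoc,
      ← Matrix.mul_assoc (hD.eigenvectorUnitary : Matrix m m 𝕜), ← star_eq_conjTranspose,
      mem_unitaryGroup_iff.mp hD.eigenvectorUnitary.2, Matrix.one_mul,
      CFC.sqrt_mul_sqrt_self C hC.nonneg]
  · rw [← Matrix.mul_assoc, hsqrt_comm.eq, Matrix.mul_assoc, hD.mul_eigenvectorUnitary,
      Matrix.mul_assoc]

end Matrix

section Choi

variable {n : Type*} [Fintype n] [DecidableEq n]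

theorem apply_eq_sum_choi (Φ : Matrix n n ℂ →ₗ[ℂ] Matrix n n ℂ) (X : Matrix n n ℂ) (a b : n) :
    Φ X a b = ∑ i, ∑ j, X i j * choi Φ (i, a) (j, b) := by
  conv_lhs => rw [X.matrix_eq_sum_single]
  simp only [map_sum, Matrix.sum_apply]
  refine Finset.sum_congr rfl fun i _ => Finset.sum_congr rfl fun j _ => ?_
  rw [show Matrix.single i j (X i j) = X i j • Matrix.single i j 1 by simp, map_smul]
  rfl

theorem kronecker_mul_choi (Φ : Matrix n n ℂ →ₗ[ℂ] Matrix n n ℂ) (A B : Matrix n n ℂ) :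
    (Aᵀ ⊗ₖ B) * choi Φ =
      Matrix.of fun p q => (B * Φ (A * Matrix.single p.1 q.1 1)) p.2 q.2 := by
  ext ⟨i, a⟩ ⟨j, b⟩
  simp only [Matrix.mul_apply, Fintype.sum_prod_type, Matrix.kroneckerMap_apply,
    Matrix.transpose_apply, Matrix.of_apply, apply_eq_sum_choi Φ (A * _)]
  simp only [Matrix.single_apply, ite_and, mul_ite, mul_one, mul_zero, Finset.sum_ite_eq,
    Finset.mem_univ, ↓reduceIte, ite_mul, zero_mul, Finset.mul_sum]
  rw [Finset.sum_comm]
  exact Finset.sum_congr rfl fun _ _ => Finset.sum_congr rfl fun _ _ => by ring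

theorem choi_mul_kronecker (Φ : Matrix n n ℂ →ₗ[ℂ] Matrix n n ℂ) (A B : Matrix n n ℂ) :
    choi Φ * (Aᵀ ⊗ₖ B) =
      Matrix.of fun p q => (Φ (Matrix.single p.1 q.1 1 * A) * B) p.2 q.2 := by
  ext ⟨i, a⟩ ⟨j, b⟩
  simp only [Matrix.mul_apply, Fintype.sum_prod_type, Matrix.kroneckerMap_apply,
    Matrix.transpose_apply, Matrix.of_apply, apply_eq_sum_choi Φ (_ * A)]
  simp only [Matrix.single_apply, ite_and, ite_mul, one_mul, zero_mul, Finset.sum_ite_irrel,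
    Finset.sum_ite_eq, Finset.mem_univ, ↓reduceIte, Finset.sum_const_zero, Finset.sum_mul]
  rw [Finset.sum_comm]
  exact Finset.sum_congr rfl fun _ _ => Finset.sum_congr rfl fun _ _ => by ring

theorem commute_kronecker_choi_of_covariant (Φ : Matrix n n ℂ →ₗ[ℂ] Matrix n n ℂ)
    {σ : Matrix n n ℂ} (hσ : IsUnit σ.det) (hmod : ∀ X, σ * Φ X * σ⁻¹ = Φ (σ * X * σ⁻¹)) :
    Commute ((σ⁻¹)ᵀ ⊗ₖ σ) (choi Φ) := by
  have hcov : ∀ Y, σ * Φ (σ⁻¹ * Y) = Φ (Y * σ⁻¹) * σ := fun Y => by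
    rw [← Matrix.nonsing_inv_mul_cancel_right σ (σ * Φ (σ⁻¹ * Y)) hσ, hmod,
      Matrix.mul_nonsing_inv_cancel_left σ Y hσ]
  rw [commute_iff_eq, kronecker_mul_choi, choi_mul_kronecker]
  simp only [hcov]

end Choi

section KrausOfCol

variable {n κ : Type*}

def krausOfCol (T : Matrix (n × n) κ ℂ) (k : κ) : Matrix n n ℂ :=
  Matrix.of fun a i => T (i, a) k

theorem krausOfCol_kronecker_mul [Fintype n] (A B : Matrix n n ℂ) (T : Matrix (n × n) κ ℂ)
    (k : κ) : krausOfCol ((Aᵀ ⊗ₖ B) * T) k = B * krausOfCol T k * A := by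
  ext a i
  simp only [krausOfCol, Matrix.mul_apply, Fintype.sum_prod_type, Matrix.kroneckerMap_apply,
    Matrix.transpose_apply, Matrix.of_apply, Finset.sum_mul]
  exact Finset.sum_congr rfl fun _ _ => Finset.sum_congr rfl fun _ _ => by ring

theorem krausOfCol_mul_diagonal [Fintype κ] [DecidableEq κ]
    (T : Matrix (n × n) κ ℂ) (d : κ → ℂ) (k : κ) :
    krausOfCol (T * Matrix.diagonal d) k = d k • krausOfCol T k := by
  ext a i
  simp [krausOfCol, mul_comm]

theorem apply_eq_sum_krausOfCol [Fintype n] [DecidableEq n] [Fintype κ]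
    {Φ : Matrix n n ℂ →ₗ[ℂ] Matrix n n ℂ}
    {T : Matrix (n × n) κ ℂ} (hT : choi Φ = T * Tᴴ) (X : Matrix n n ℂ) :
    Φ X = ∑ k, krausOfCol T k * X * (krausOfCol T k)ᴴ := by
  ext a b
  simp only [apply_eq_sum_choi, hT, Matrix.sum_apply, Matrix.mul_apply, krausOfCol,
    Matrix.conjTranspose_apply, Matrix.of_apply, Finset.mul_sum, Finset.sum_mul]
  simp only [Finset.sum_comm (γ := κ)]
  rw [Finset.sum_comm]
  exact Finset.sum_congr rfl fun _ _ => Finset.sum_congr rfl fun _ _ =>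
    Finset.sum_congr rfl fun _ _ => by ring

theorem mul_krausOfCol_eq_smul_mul [Fintype n] [DecidableEq n] [Fintype κ]
    [DecidableEq κ] {σ : Matrix n n ℂ} (hσ : IsUnit σ.det) {T : Matrix (n × n) κ ℂ} {d : κ → ℂ}
    (hT : ((σ⁻¹)ᵀ ⊗ₖ σ) * T = T * Matrix.diagonal d) (k : κ) :
    σ * krausOfCol T k = d k • (krausOfCol T k * σ) := by
  have h := congrArg (krausOfCol · k) hT
  simp only [krausOfCol_kronecker_mul, krausOfCol_mul_diagonal] at h
  rw [← Matrix.smul_mul, ← h]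
  exact (Matrix.nonsing_inv_mul_cancel_right σ _ hσ).symm

end KrausOfCol

theorem kraus_modular_general {n : Type*} [Fintype n] [DecidableEq n]
    (σ : Matrix n n ℂ) (hσ : σ.PosDef)
    (Φ : Matrix n n ℂ →ₗ[ℂ] Matrix n n ℂ)
    (hCP : (choi Φ).PosSemidef) (hunital : Φ 1 = 1)
    (hmod : ∀ X, σ * Φ X * σ⁻¹ = Φ (σ * X * σ⁻¹)) :
    ∃ (m : ℕ) (R : Fin m → Matrix n n ℂ) (ω : Fin m → ℝ),
      (∀ k, 0 ≤ ω k) ∧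
      (∀ k, σ * R k = (ω k : ℂ) • (R k * σ)) ∧
      (∀ X, Φ X = ∑ k, R k * X * (R k)ᴴ) ∧
      (∑ k, R k * (R k)ᴴ = 1) := by
  have hdet : IsUnit σ.det := hσ.isUnit.map Matrix.detMonoidHom
  have hD : ((σ⁻¹)ᵀ ⊗ₖ σ).PosSemidef := hσ.inv.transpose.posSemidef.kronecker hσ.posSemidef
  obtain ⟨T, hCT, hDT⟩ := hCP.exists_eq_mul_conjTranspose_of_commute hD.isHermitian
    (commute_kronecker_choi_of_covariant Φ hdet hmod)
  have hkraus := apply_eq_sum_krausOfCol hCT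
  let e := (Fintype.equivFin (n × n)).symm
  refine ⟨_, fun k => krausOfCol T (e k), fun k => hD.isHermitian.eigenvalues (e k),
    fun k => hD.eigenvalues_nonneg _, fun k => mul_krausOfCol_eq_smul_mul hdet hDT _,
    fun X => ?_, ?_⟩
  · rw [hkraus, ← e.sum_comp]
  · simpa only [Matrix.mul_one, hunital, ← e.sum_comp] using (hkraus 1).symm

/-- A completely positive unital map commuting with the modular operator
`Δ_σ(X) = σ X σ⁻¹` has a Kraus decomposition `Φ(X) = Σ_k R_k X R_k†` with
`Σ_k R_k R_k† = I` and `σ R_k = ω_k R_k σ` for some scalars `ω_k ≥ 0`. -/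
theorem kraus_modular {n : Type*} [Fintype n] [DecidableEq n]
    (σ : Matrix n n ℂ) (hσ : σ.PosDef) (hσ1 : σ.trace = 1)
    (Φ : Matrix n n ℂ →ₗ[ℂ] Matrix n n ℂ)
    (hCP : (choi Φ).PosSemidef) (hunital : Φ 1 = 1)
    (hmod : ∀ X, σ * Φ X * σ⁻¹ = Φ (σ * X * σ⁻¹)) :
    ∃ (m : ℕ) (R : Fin m → Matrix n n ℂ) (ω : Fin m → ℝ),
      (∀ k, 0 ≤ ω k) ∧
      (∀ k, σ * R k = (ω k : ℂ) • (R k * σ)) ∧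
      (∀ X, Φ X = ∑ k, R k * X * (R k)ᴴ) ∧
      (∑ k, R k * (R k)ᴴ = 1) :=
  kraus_modular_general σ hσ Φ hCP hunital hmod
end

section
/- Let P and Q be probability distributions on a finite set with D(P‖Q) < ∞ and γ = max_x P(x)/Q(x). For any test f : Ω^n → [0,1], if α := 1 − E_{P^{⊗n}}[f] is the Type I error and β := E_{Q^{⊗n}}[f] the Type II error, then β ≥ (1−α) · exp(−n D(P‖Q) − 2√(n γ log(1/(1−α)))). -/
open Matrix BigOperators
open scoped ComplexOrder

/-
Write `S = 1 - α = E_{P^n}[f]` and let `E` be the mean of the log-likelihood ratio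
`Λ = log (P^n / Q^n)` under the tilted law `f dP^n / S`. Jensen's inequality for `exp` gives the
change-of-measure bound `β ≥ S exp (-E / S)`. In the other direction, Jensen again
(Donsker–Varadhan) gives `exp (t E / S) ≤ E_{P^n}[e^{tΛ}] / S = M(t)^n / S` with
`M(t) = ∑ P (P / Q)^t`, and a second-order expansion yields `M(t) ≤ 1 + t D + γ t²` for
`0 ≤ t ≤ 1/4`. Hence `E / S ≤ n D + n γ t + log (1 / S) / t`; optimizing in `t`, and falling back
on the trivial bound `Λ ≤ n log γ` when the optimum exceeds `1/4`, gives
`E / S ≤ n D + 2 √(n γ log (1 / S))`.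
-/

open Real Finset

lemma exp_le_quadratic_of_nonpos {t : ℝ} (ht : t ≤ 0) : exp t ≤ 1 + t + t ^ 2 / 2 := by
  have hderiv (s : ℝ) :
      HasDerivAt (fun s ↦ 1 + s + s ^ 2 / 2 - exp s) (1 + s - exp s) s :=
    ((((hasDerivAt_id' s).const_add 1).add ((hasDerivAt_pow 2 s).div_const 2)).sub
      (hasDerivAt_exp s)).congr_deriv (by ring)
  have := antitone_of_hasDerivAt_nonpos hderiv
    (fun s ↦ show 1 + s - exp s ≤ 0 by linarith [add_one_le_exp s]) ht
  norm_num at this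
  linarith

lemma exp_le_one_add_add_sq_div_two_mul_exp_of_nonneg {t : ℝ} (ht : 0 ≤ t) :
    exp t ≤ 1 + t + t ^ 2 / 2 * exp t := by
  have hderiv (s : ℝ) :
      HasDerivAt (fun s ↦ (1 + s) * exp (-s) + s ^ 2 / 2) (s * (1 - exp (-s))) s :=
    ((((hasDerivAt_id' s).const_add 1).mul (hasDerivAt_neg s).exp).add
      ((hasDerivAt_pow 2 s).div_const 2)).congr_deriv (by ring)
  have hderiv_nonneg (s : ℝ) : 0 ≤ s * (1 - exp (-s)) := by
    rcases le_total 0 s with hs | hs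
    · exact mul_nonneg hs (by simpa using hs)
    · exact mul_nonneg_of_nonpos_of_nonpos hs (by simpa using hs)
  have := monotone_of_hasDerivAt_nonneg hderiv hderiv_nonneg ht
  norm_num at this
  have hmul : exp (-t) * exp t = 1 := by rw [← exp_add, neg_add_cancel, exp_zero]
  nlinarith [exp_pos t]

lemma exp_one_mul_mul_log_le_rpow {y : ℝ} (hy : 0 < y) (ε : ℝ) :
    exp 1 * (ε * log y) ≤ y ^ ε := by
  simpa [← log_rpow hy, exp_log (rpow_pos_of_pos hy ε)] using exp_one_mul_le_exp (x := log (y ^ ε))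

lemma mul_log_sq_le_one {r : ℝ} (hr0 : 0 < r) (hr1 : r ≤ 1) : r * log r ^ 2 ≤ 1 := by
  have h := exp_one_mul_mul_log_le_rpow (inv_pos.2 hr0) (1 / 2)
  rw [← sqrt_eq_rpow, log_inv] at h
  have hlog : 0 ≤ exp 1 * (1 / 2 * -log r) :=
    mul_nonneg (exp_pos 1).le (mul_nonneg (by norm_num) (neg_nonneg.2 (log_nonpos hr0.le hr1)))
  have hsq := pow_le_pow_left₀ hlog h 2
  rw [sq_sqrt (inv_pos.2 hr0).le] at hsq
  have he : 4 ≤ exp 1 ^ 2 := by nlinarith [exp_one_gt_d9]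
  calc r * log r ^ 2 ≤ exp 1 ^ 2 / 4 * (r * log r ^ 2) :=
        le_mul_of_one_le_left (by positivity) (by linarith)
    _ = r * (exp 1 * (1 / 2 * -log r)) ^ 2 := by ring
    _ ≤ r * r⁻¹ := by gcongr
    _ = 1 := mul_inv_cancel₀ hr0.ne'

lemma log_sq_mul_rpow_le {r : ℝ} (hr : 1 ≤ r) : log r ^ 2 * r ^ (1 / 4 : ℝ) ≤ r := by
  have hr0 : 0 < r := by linarith
  have hlog : 0 ≤ exp 1 * (3 / 8 * log r) :=
    mul_nonneg (exp_pos 1).le (mul_nonneg (by norm_num) (log_nonneg hr))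
  have hsq := pow_le_pow_left₀ hlog (exp_one_mul_mul_log_le_rpow hr0 (3 / 8)) 2
  have hpow : (r ^ (3 / 8 : ℝ)) ^ 2 = r ^ (3 / 4 : ℝ) := by
    rw [← rpow_natCast, ← rpow_mul hr0.le]; norm_num
  have he : 64 / 9 ≤ exp 1 ^ 2 := by nlinarith [exp_one_gt_d9]
  calc log r ^ 2 * r ^ (1 / 4 : ℝ)
      ≤ (exp 1 * (3 / 8 * log r)) ^ 2 * r ^ (1 / 4 : ℝ) := by
        gcongr ?_ * _
        nlinarith [mul_le_mul_of_nonneg_right he (sq_nonneg (log r))]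
    _ ≤ r ^ (3 / 4 : ℝ) * r ^ (1 / 4 : ℝ) := by gcongr; rwa [← hpow]
    _ = r := by rw [← rpow_add hr0]; norm_num

/-- Second-order expansion of `t ↦ r ^ (1 + t)` at `t = 0`. For `r ≥ 1` the remainder carries a
factor `r ^ t ≤ r ^ (1/4)`, which `log_sq_mul_rpow_le` absorbs. -/
lemma mul_rpow_sub_le {r γ t : ℝ} (hr : 0 ≤ r) (hrγ : r ≤ γ) (ht0 : 0 ≤ t) (ht : t ≤ 1 / 4) :
    r * r ^ t - r - t * (r * log r) ≤ t ^ 2 / 2 * (1 + γ * r) := by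
  rcases hr.eq_or_lt with rfl | hr
  · simp only [zero_mul, sub_self, mul_zero, add_zero, mul_one]
    positivity
  have hexp : r * r ^ t - r - t * (r * log r) = r * (exp (t * log r) - 1 - t * log r) := by
    rw [rpow_def_of_pos hr, mul_comm (log r)]; ring
  rw [hexp]
  rcases le_total r 1 with hr1 | hr1
  · have hx : t * log r ≤ 0 := mul_nonpos_of_nonneg_of_nonpos ht0 (log_nonpos hr.le hr1)
    calc r * (exp (t * log r) - 1 - t * log r)
        ≤ r * ((t * log r) ^ 2 / 2) := by
          gcongr; linarith [exp_le_quadratic_of_nonpos hx]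
      _ = t ^ 2 / 2 * (r * log r ^ 2) := by ring
      _ ≤ t ^ 2 / 2 * (1 + γ * r) := by
          gcongr; nlinarith [mul_log_sq_le_one hr hr1]
  · have hx : 0 ≤ t * log r := mul_nonneg ht0 (log_nonneg hr1)
    have hpow : exp (t * log r) ≤ r ^ (1 / 4 : ℝ) := by
      rw [mul_comm, ← rpow_def_of_pos hr]
      exact rpow_le_rpow_of_exponent_le hr1 ht
    calc r * (exp (t * log r) - 1 - t * log r)
        ≤ r * ((t * log r) ^ 2 / 2 * exp (t * log r)) := by
          gcongr; linarith [exp_le_one_add_add_sq_div_two_mul_exp_of_nonneg hx]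
      _ = t ^ 2 / 2 * r * (log r ^ 2 * exp (t * log r)) := by ring
      _ ≤ t ^ 2 / 2 * r * (log r ^ 2 * r ^ (1 / 4 : ℝ)) := by gcongr
      _ ≤ t ^ 2 / 2 * r * r := by gcongr; exact log_sq_mul_rpow_le hr1
      _ ≤ t ^ 2 / 2 * (1 + γ * r) := by
          rw [mul_assoc]; gcongr; nlinarith

lemma mul_exp_mul_log_div {a b : ℝ} (ha : 0 ≤ a) (hb : 0 < b) (t : ℝ) :
    a * exp (t * log (a / b)) = a * (a / b) ^ t := by
  rcases ha.eq_or_lt with rfl | ha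
  · simp
  · rw [rpow_def_of_pos (div_pos ha hb), mul_comm t]

/-- The optimal `t` is `√(L / c)`; when it exceeds `1/4`, `c < 16 L` and `hcap` already
suffices. -/
lemma le_add_two_sqrt_mul {a b c L : ℝ} (hc : 0 ≤ c) (hL : 0 ≤ L) (hcap : a ≤ b + c / 2)
    (h : ∀ t, 0 < t → t ≤ 1 / 4 → a ≤ b + c * t + L / t) : a ≤ b + 2 * sqrt (c * L) := by
  rcases le_or_gt c (16 * L) with hcL | hcL
  · have : c / 4 ≤ sqrt (c * L) := le_sqrt_of_sq_le (by nlinarith)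
    linarith
  have hc0 : 0 < c := by linarith
  rcases hL.eq_or_lt with rfl | hL
  · rw [mul_zero, sqrt_zero, mul_zero, add_zero]
    refine le_of_forall_pos_le_add fun ε hε ↦ ?_
    set t := min (ε / c) (1 / 4)
    have hct : c * t ≤ ε := calc
      c * t ≤ c * (ε / c) := by gcongr; exact min_le_left _ _
      _ = ε := mul_div_cancel₀ ε hc0.ne'
    have := h t (lt_min (div_pos hε hc0) (by norm_num)) (min_le_right _ _)
    rw [zero_div, add_zero] at this
    linarith
  · have hsL := sqrt_pos.2 hL
    have hsc := sqrt_pos.2 hc0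
    have ht4 : sqrt L / sqrt c ≤ 1 / 4 := by
      rw [div_le_iff₀ hsc]
      nlinarith [sq_sqrt hL.le, sq_sqrt hc]
    calc a ≤ b + c * (sqrt L / sqrt c) + L / (sqrt L / sqrt c) := h _ (div_pos hsL hsc) ht4
      _ = b + 2 * sqrt (c * L) := by
        rw [sqrt_mul hc]
        field_simp
        linear_combination (-c) * sq_sqrt hL.le + (L - 2 * sqrt L ^ 2) * sq_sqrt hc

section

variable {X : Type*} [Fintype X]

lemma exp_sum_mul_div_le (w g : X → ℝ) (hw : ∀ x, 0 ≤ w x) (hS : 0 < ∑ x, w x) :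
    exp ((∑ x, w x * g x) / ∑ x, w x) ≤ (∑ x, w x * exp (g x)) / ∑ x, w x := by
  have := convexOn_exp.map_sum_le (t := univ) (w := fun x ↦ w x / ∑ x, w x) (p := g)
    (fun x _ ↦ div_nonneg (hw x) hS.le) (by rw [← sum_div, div_self hS.ne'])
    (fun _ _ ↦ Set.mem_univ _)
  simpa only [smul_eq_mul, div_mul_eq_mul_div, ← sum_div] using this

lemma mul_exp_neg_div_le_sum (p q f : X → ℝ) (hp : ∀ x, 0 ≤ p x) (hq : ∀ x, 0 < q x)
    (hf : ∀ x, 0 ≤ f x) (hS : 0 < ∑ x, p x * f x) :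
    (∑ x, p x * f x) * exp (-((∑ x, p x * f x * log (p x / q x)) / ∑ x, p x * f x)) ≤
      ∑ x, q x * f x := by
  have hlog : ∑ x, p x * f x * log (q x / p x) = -∑ x, p x * f x * log (p x / q x) := by
    simp only [← sum_neg_distrib, ← mul_neg, ← log_inv, inv_div]
  have hterm (x : X) : p x * f x * exp (log (q x / p x)) ≤ q x * f x := by
    rcases (hp x).eq_or_lt with h | h
    · rw [← h, zero_mul, zero_mul]; exact mul_nonneg (hq x).le (hf x)
    · rw [exp_log (div_pos (hq x) h)]; exact le_of_eq (by field_simp)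
  calc (∑ x, p x * f x) * exp (-((∑ x, p x * f x * log (p x / q x)) / ∑ x, p x * f x))
      ≤ (∑ x, p x * f x) * ((∑ x, p x * f x * exp (log (q x / p x))) / ∑ x, p x * f x) := by
        rw [← neg_div, ← hlog]
        gcongr
        exact exp_sum_mul_div_le _ _ (fun x ↦ mul_nonneg (hp x) (hf x)) hS
    _ = ∑ x, p x * f x * exp (log (q x / p x)) := mul_div_cancel₀ _ hS.ne'
    _ ≤ ∑ x, q x * f x := sum_le_sum fun x _ ↦ hterm x

lemma exp_mul_sum_mul_log_div_le (p q f : X → ℝ) (hp : ∀ x, 0 ≤ p x)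
    (hq : ∀ x, 0 < q x) (hf : ∀ x, 0 ≤ f x ∧ f x ≤ 1) (hS : 0 < ∑ x, p x * f x) (t : ℝ) :
    exp (t * (∑ x, p x * f x * log (p x / q x)) / ∑ x, p x * f x) ≤
      (∑ x, p x * (p x / q x) ^ t) / ∑ x, p x * f x := calc
  _ = exp ((∑ x, p x * f x * (t * log (p x / q x))) / ∑ x, p x * f x) := by
      rw [mul_sum]; congr! 3 with x; ring
  _ ≤ (∑ x, p x * f x * exp (t * log (p x / q x))) / ∑ x, p x * f x :=
      exp_sum_mul_div_le _ _ (fun x ↦ mul_nonneg (hp x) (hf x).1) hS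
  _ ≤ (∑ x, p x * exp (t * log (p x / q x))) / ∑ x, p x * f x := by
      gcongr with x
      exact mul_le_of_le_one_right (hp x) (hf x).2
  _ = (∑ x, p x * (p x / q x) ^ t) / ∑ x, p x * f x := by
      congr! 2 with x
      exact mul_exp_mul_log_div (hp x) (hq x) t

lemma sum_mul_log_div_le_mul_log (p q f : X → ℝ) (hp : ∀ x, 0 ≤ p x) (hq : ∀ x, 0 < q x)
    (hf : ∀ x, 0 ≤ f x) {κ : ℝ} (hpq : ∀ x, p x ≤ κ * q x) :
    ∑ x, p x * f x * log (p x / q x) ≤ (∑ x, p x * f x) * log κ := by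
  rw [sum_mul]
  refine sum_le_sum fun x _ ↦ ?_
  rcases (hp x).eq_or_lt with h | h
  · simp [← h]
  · gcongr
    · exact mul_nonneg (hp x) (hf x)
    · exact div_pos h (hq x)
    · exact (div_le_iff₀ (hq x)).2 (hpq x)

lemma sum_mul_log_div_nonneg {P Q : X → ℝ} (hP : ∀ x, 0 ≤ P x) (hQ : ∀ x, 0 < Q x)
    (hP1 : ∑ x, P x = 1) (hQ1 : ∑ x, Q x = 1) : 0 ≤ ∑ x, P x * log (P x / Q x) := by
  have := mul_exp_neg_div_le_sum P Q 1 hP hQ (fun _ ↦ zero_le_one) (by simp [hP1])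
  simp only [Pi.one_apply, mul_one, hP1, hQ1, div_one, one_mul, exp_le_one_iff] at this
  linarith

lemma one_le_of_forall_div_le {P Q : X → ℝ} (hQ : ∀ x, 0 < Q x)
    (hP1 : ∑ x, P x = 1) (hQ1 : ∑ x, Q x = 1) {γ : ℝ} (hPQ : ∀ x, P x / Q x ≤ γ) : 1 ≤ γ := calc
  1 = ∑ x, P x := hP1.symm
  _ ≤ ∑ x, γ * Q x := sum_le_sum fun x _ ↦ (div_le_iff₀ (hQ x)).1 (hPQ x)
  _ = γ := by rw [← mul_sum, hQ1, mul_one]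

lemma sum_mul_div_rpow_le {P Q : X → ℝ} (hP : ∀ x, 0 ≤ P x)
    (hQ : ∀ x, 0 < Q x) (hP1 : ∑ x, P x = 1) (hQ1 : ∑ x, Q x = 1) {γ : ℝ}
    (hPQ : ∀ x, P x / Q x ≤ γ) {t : ℝ} (ht0 : 0 ≤ t) (ht : t ≤ 1 / 4) :
    ∑ x, P x * (P x / Q x) ^ t ≤ 1 + t * ∑ x, P x * log (P x / Q x) + γ * t ^ 2 := by
  have hγ : 1 ≤ γ := one_le_of_forall_div_le hQ hP1 hQ1 hPQ
  have hterm (x : X) : P x * (P x / Q x) ^ t - P x - t * (P x * log (P x / Q x)) ≤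
      t ^ 2 / 2 * (Q x + γ * P x) := by
    have hr := mul_rpow_sub_le (div_nonneg (hP x) (hQ x).le) (hPQ x) ht0 ht
    set r := P x / Q x
    rw [← mul_div_cancel₀ (P x) (hQ x).ne']
    linear_combination mul_le_mul_of_nonneg_left hr (hQ x).le
  calc ∑ x, P x * (P x / Q x) ^ t
      = ∑ x, (P x + t * (P x * log (P x / Q x))
          + (P x * (P x / Q x) ^ t - P x - t * (P x * log (P x / Q x)))) := by
        congr! 1 with x; ring
    _ ≤ ∑ x, (P x + t * (P x * log (P x / Q x)) + t ^ 2 / 2 * (Q x + γ * P x)) := by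
        gcongr with x; exact hterm x
    _ = 1 + t * ∑ x, P x * log (P x / Q x) + t ^ 2 / 2 * (1 + γ) := by
        rw [sum_add_distrib, sum_add_distrib, ← mul_sum, ← mul_sum, sum_add_distrib, ← mul_sum,
          hP1, hQ1, mul_one]
    _ ≤ 1 + t * ∑ x, P x * log (P x / Q x) + γ * t ^ 2 := by nlinarith

end

lemma sum_prod_mul_div_rpow {Ω : Type*} [Fintype Ω] (m : ℕ) {P Q : Ω → ℝ}
    (hP : ∀ x, 0 ≤ P x) (hQ : ∀ x, 0 ≤ Q x) (t : ℝ) :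
    ∑ x : Fin m → Ω, (∏ i, P (x i)) * ((∏ i, P (x i)) / ∏ i, Q (x i)) ^ t =
      (∑ ω, P ω * (P ω / Q ω) ^ t) ^ m := by
  rw [Fintype.sum_pow]
  refine sum_congr rfl fun x _ ↦ ?_
  rw [← prod_div_distrib, ← finsetProd_rpow _ _ (fun i _ ↦ div_nonneg (hP _) (hQ _)),
    ← prod_mul_distrib]

lemma sum_prod_mul_log_div_le {Ω : Type*} [Fintype Ω] (m : ℕ) {P Q : Ω → ℝ}
    (hP : ∀ x, 0 ≤ P x) (hQ : ∀ x, 0 < Q x) (hP1 : ∑ x, P x = 1) (hQ1 : ∑ x, Q x = 1)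
    {γ : ℝ} (hPQ : ∀ x, P x / Q x ≤ γ) (f : (Fin m → Ω) → ℝ) (hf : ∀ x, 0 ≤ f x ∧ f x ≤ 1)
    (hS : 0 < ∑ x : Fin m → Ω, (∏ i, P (x i)) * f x) :
    (∑ x : Fin m → Ω, (∏ i, P (x i)) * f x * log ((∏ i, P (x i)) / ∏ i, Q (x i))) /
        ∑ x : Fin m → Ω, (∏ i, P (x i)) * f x ≤
      m * ∑ x, P x * log (P x / Q x) +
        2 * sqrt (m * γ * log (1 / ∑ x : Fin m → Ω, (∏ i, P (x i)) * f x)) := by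
  set S := ∑ x : Fin m → Ω, (∏ i, P (x i)) * f x
  set E := ∑ x : Fin m → Ω, (∏ i, P (x i)) * f x * log ((∏ i, P (x i)) / ∏ i, Q (x i))
  set D := ∑ x, P x * log (P x / Q x)
  have hD : 0 ≤ D := sum_mul_log_div_nonneg hP hQ hP1 hQ1
  have hγ : 1 ≤ γ := one_le_of_forall_div_le hQ hP1 hQ1 hPQ
  have hp (x : Fin m → Ω) : 0 ≤ ∏ i, P (x i) := prod_nonneg fun i _ ↦ hP _
  have hq (x : Fin m → Ω) : 0 < ∏ i, Q (x i) := prod_pos fun i _ ↦ hQ _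
  have hS1 : S ≤ 1 := calc
    S ≤ ∑ x : Fin m → Ω, ∏ i, P (x i) :=
      sum_le_sum fun x _ ↦ mul_le_of_le_one_right (hp x) (hf x).2
    _ = 1 := by rw [← Fintype.sum_pow, hP1, one_pow]
  have hL : 0 ≤ log (1 / S) := log_nonneg (one_le_one_div hS hS1)
  refine le_add_two_sqrt_mul (by positivity) hL ?_ fun t ht0 ht ↦ ?_
  · have hpq (x : Fin m → Ω) : ∏ i, P (x i) ≤ γ ^ m * ∏ i, Q (x i) := calc
      ∏ i, P (x i) ≤ ∏ i, (γ * Q (x i)) :=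
        prod_le_prod (fun i _ ↦ hP _) fun i _ ↦ (div_le_iff₀ (hQ _)).1 (hPQ _)
      _ = γ ^ m * ∏ i, Q (x i) := by
        rw [prod_mul_distrib, prod_const, card_univ, Fintype.card_fin]
    have hlogγ : log γ ≤ γ / 2 := by
      have := exp_one_mul_mul_log_le_rpow (by positivity : 0 < γ) 1
      rw [one_mul, rpow_one] at this
      nlinarith [exp_one_gt_d9, log_nonneg hγ]
    rw [div_le_iff₀ hS]
    calc E ≤ S * log (γ ^ m) := sum_mul_log_div_le_mul_log _ _ f hp hq (fun x ↦ (hf x).1) hpq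
      _ = S * (m * log γ) := by rw [log_pow]
      _ ≤ (m * D + m * γ / 2) * S := by
        rw [mul_comm]; gcongr; nlinarith [mul_le_mul_of_nonneg_left hlogγ (Nat.cast_nonneg m)]
  · have hmgf := sum_mul_div_rpow_le hP hQ hP1 hQ1 hPQ ht0.le ht
    have hexp : exp (t * E / S) ≤ exp (m * (t * D + γ * t ^ 2) + log (1 / S)) := calc
      exp (t * E / S) ≤ (∑ x, P x * (P x / Q x) ^ t) ^ m / S := by
        rw [← sum_prod_mul_div_rpow m hP (fun x ↦ (hQ x).le) t]
        exact exp_mul_sum_mul_log_div_le _ _ f hp hq hf hS t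
      _ ≤ exp (t * D + γ * t ^ 2) ^ m / S := by
        gcongr
        · exact sum_nonneg fun x _ ↦
            mul_nonneg (hP x) (rpow_nonneg (div_nonneg (hP x) (hQ x).le) t)
        · linarith [add_one_le_exp (t * D + γ * t ^ 2)]
      _ = exp (m * (t * D + γ * t ^ 2) + log (1 / S)) := by
        rw [← exp_nat_mul, exp_add, exp_log (one_div_pos.2 hS), mul_one_div]
    rw [exp_le_exp] at hexp
    calc E / S = t * E / S / t := by field_simp
      _ ≤ (m * (t * D + γ * t ^ 2) + log (1 / S)) / t := by gcongr
      _ = m * D + m * γ * t + log (1 / S) / t := by field_simp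

theorem classical_hypothesis_testing_general {Ω : Type*} [Fintype Ω] (m : ℕ)
    (P Q : Ω → ℝ) (hP : ∀ x, 0 ≤ P x) (hQ : ∀ x, 0 < Q x)
    (hP1 : ∑ x, P x = 1) (hQ1 : ∑ x, Q x = 1)
    (γ : ℝ) (hγ : γ = ⨆ x, P x / Q x)
    (f : (Fin m → Ω) → ℝ) (hf : ∀ x, 0 ≤ f x ∧ f x ≤ 1)
    (α β : ℝ)
    (hα : α = 1 - ∑ x : Fin m → Ω, (∏ i, P (x i)) * f x)
    (hβ : β = ∑ x : Fin m → Ω, (∏ i, Q (x i)) * f x) :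
    (1 - α) * Real.exp (-(m * (∑ x, P x * Real.log (P x / Q x)))
      - 2 * Real.sqrt (m * γ * Real.log (1 / (1 - α)))) ≤ β := by
  have hPQ (x : Ω) : P x / Q x ≤ γ :=
    hγ ▸ le_ciSup (f := fun x ↦ P x / Q x) (Set.finite_range _).bddAbove x
  have hp (x : Fin m → Ω) : 0 ≤ ∏ i, P (x i) := prod_nonneg fun i _ ↦ hP _
  have hq (x : Fin m → Ω) : 0 < ∏ i, Q (x i) := prod_pos fun i _ ↦ hQ _
  rw [hα, sub_sub_cancel, hβ]
  rcases (sum_nonneg fun x _ ↦ mul_nonneg (hp x) (hf x).1).eq_or_lt with hS | hS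
  · rw [← hS, zero_mul]
    exact sum_nonneg fun x _ ↦ mul_nonneg (hq x).le (hf x).1
  refine le_trans ?_ (mul_exp_neg_div_le_sum _ _ f hp hq (fun x ↦ (hf x).1) hS)
  gcongr
  linarith [sum_prod_mul_log_div_le m hP hQ hP1 hQ1 hPQ f hf hS]

/-- Strong converse bound for classical hypothesis testing via reverse
hypercontractivity: `β ≥ (1-α) exp(-n D(P‖Q) - 2 √(n γ log(1/(1-α))))`. -/
theorem classical_hypothesis_testing {Ω : Type*} [Fintype Ω] [Nonempty Ω] (m : ℕ)
    (P Q : Ω → ℝ) (hP : ∀ x, 0 ≤ P x) (hQ : ∀ x, 0 < Q x)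
    (hP1 : ∑ x, P x = 1) (hQ1 : ∑ x, Q x = 1)
    (γ : ℝ) (hγ : γ = ⨆ x, P x / Q x)
    (f : (Fin m → Ω) → ℝ) (hf : ∀ x, 0 ≤ f x ∧ f x ≤ 1)
    (α β : ℝ)
    (hα : α = 1 - ∑ x : Fin m → Ω, (∏ i, P (x i)) * f x)
    (hβ : β = ∑ x : Fin m → Ω, (∏ i, Q (x i)) * f x) :
    (1 - α) * Real.exp (-(m * (∑ x, P x * Real.log (P x / Q x)))
      - 2 * Real.sqrt (m * γ * Real.log (1 / (1 - α)))) ≤ β :=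
  classical_hypothesis_testing_general m P Q hP hQ hP1 hQ1 γ hγ f hf α β hα hβ
end

section
/- Let X be a positive semi-definite 2×2 block matrix X = [[A, C],[C†, B]] with blocks in B(H'), and let ρ be a positive definite density matrix on H'. Then ‖C‖_{2,ρ} ≤ ‖A‖_{2,ρ}^{1/2} ‖B‖_{2,ρ}^{1/2}, and consequently the 2×2 matrix M = [[‖A‖_{2,ρ}, ‖C‖_{2,ρ}],[‖C†‖_{2,ρ}, ‖B‖_{2,ρ}]] is positive semi-definite. -/
open Matrix BigOperators
open scoped ComplexOrder

/-- The weighted 2-norm `‖Y‖_{2,ρ} = ‖ρ^{1/4} Y ρ^{1/4}‖_2`. -/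
noncomputable def wnorm2 {n : Type*} [Fintype n] [DecidableEq n]
    (ρ : Matrix n n ℂ) (Y : Matrix n n ℂ) : ℝ :=
  Real.sqrt ((((mpow ρ (1/4) * Y * mpow ρ (1/4))ᴴ *
    (mpow ρ (1/4) * Y * mpow ρ (1/4))).trace).re)

/-!
Write `X = Sᴴ S` and let `Tᵢ = Sᵢ ρ^{1/4}`, where `Sᵢ` is the `i`-th column block of `S`. The
weighted blocks are then Gram matrices: `ρ^{1/4} A ρ^{1/4} = T₀ᴴ T₀`, `ρ^{1/4} B ρ^{1/4} = T₁ᴴ T₁`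
and `ρ^{1/4} C ρ^{1/4} = T₀ᴴ T₁`. By cyclicity of the trace `‖T₀ᴴ T₁‖₂² = tr (T₀ T₀ᴴ · T₁ T₁ᴴ)`,
which Cauchy–Schwarz for the Hilbert–Schmidt inner product bounds by
`‖T₀ T₀ᴴ‖₂ ‖T₁ T₁ᴴ‖₂ = ‖T₀ᴴ T₀‖₂ ‖T₁ᴴ T₁‖₂`. Positivity of the `2 × 2` matrix of norms is then the
criterion `c² ≤ a b`, since `‖C†‖_{2,ρ} = ‖C‖_{2,ρ}`.
-/

open WithLp
open scoped MatrixOrder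

namespace Matrix

section HilbertSchmidt

variable {𝕜 : Type*} [RCLike 𝕜] {m n : Type*} [Fintype m] [Fintype n]

/-- The Hilbert–Schmidt norm `‖Z‖₂`. -/
noncomputable def hsNorm (Z : Matrix m n 𝕜) : ℝ := √(RCLike.re (Zᴴ * Z).trace)

lemma trace_conjTranspose_mul_eq_inner (A B : Matrix m n 𝕜) :
    (Aᴴ * B).trace = inner 𝕜 (toLp 2 A.vec : EuclideanSpace 𝕜 (n × m)) (toLp 2 B.vec) := by
  rw [EuclideanSpace.inner_toLp_toLp, dotProduct_comm, star_vec_dotProduct_vec]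

lemma hsNorm_eq_norm_vec (Z : Matrix m n 𝕜) :
    hsNorm Z = ‖(toLp 2 Z.vec : EuclideanSpace 𝕜 (n × m))‖ := by
  rw [hsNorm, trace_conjTranspose_mul_eq_inner, norm_eq_sqrt_re_inner (𝕜 := 𝕜)]

lemma hsNorm_nonneg (Z : Matrix m n 𝕜) : 0 ≤ hsNorm Z := Real.sqrt_nonneg _

lemma sq_hsNorm (Z : Matrix m n 𝕜) : hsNorm Z ^ 2 = RCLike.re (Zᴴ * Z).trace := by
  rw [hsNorm_eq_norm_vec, ← inner_self_eq_norm_sq (𝕜 := 𝕜), trace_conjTranspose_mul_eq_inner]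

lemma re_trace_conjTranspose_mul_le (A B : Matrix m n 𝕜) :
    RCLike.re (Aᴴ * B).trace ≤ hsNorm A * hsNorm B := by
  rw [trace_conjTranspose_mul_eq_inner, hsNorm_eq_norm_vec, hsNorm_eq_norm_vec]
  exact re_inner_le_norm _ _

lemma hsNorm_conjTranspose (Z : Matrix m n 𝕜) : hsNorm Zᴴ = hsNorm Z := by
  rw [hsNorm, hsNorm, conjTranspose_conjTranspose, trace_mul_comm]

lemma hsNorm_conjTranspose_mul_self (T : Matrix m n 𝕜) :
    hsNorm (Tᴴ * T) = hsNorm (T * Tᴴ) := by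
  simp only [hsNorm, conjTranspose_mul, conjTranspose_conjTranspose, Matrix.mul_assoc]
  rw [trace_mul_comm]
  simp only [Matrix.mul_assoc]

lemma sq_hsNorm_conjTranspose_mul_le (T₀ T₁ : Matrix m n 𝕜) :
    hsNorm (T₀ᴴ * T₁) ^ 2 ≤ hsNorm (T₀ᴴ * T₀) * hsNorm (T₁ᴴ * T₁) :=
  calc hsNorm (T₀ᴴ * T₁) ^ 2 = RCLike.re ((T₀ * T₀ᴴ)ᴴ * (T₁ * T₁ᴴ)).trace := by
        rw [sq_hsNorm]
        simp only [conjTranspose_mul, conjTranspose_conjTranspose, Matrix.mul_assoc]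
        rw [trace_mul_comm]
        simp only [Matrix.mul_assoc]
    _ ≤ hsNorm (T₀ * T₀ᴴ) * hsNorm (T₁ * T₁ᴴ) := re_trace_conjTranspose_mul_le _ _
    _ = hsNorm (T₀ᴴ * T₀) * hsNorm (T₁ᴴ * T₁) := by
        rw [hsNorm_conjTranspose_mul_self, hsNorm_conjTranspose_mul_self]

lemma hsNorm_conjTranspose_mul_le (T₀ T₁ : Matrix m n 𝕜) :
    hsNorm (T₀ᴴ * T₁) ≤ √(hsNorm (T₀ᴴ * T₀)) * √(hsNorm (T₁ᴴ * T₁)) := by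
  rw [← Real.sqrt_mul (hsNorm_nonneg _)]
  exact Real.le_sqrt_of_sq_le (sq_hsNorm_conjTranspose_mul_le T₀ T₁)

end HilbertSchmidt

lemma submatrix_conjTranspose_mul_self {α ι m n : Type*} [Mul α] [AddCommMonoid α] [Star α]
    [Fintype m] (S : Matrix m (ι × n) α) (i j : ι) :
    (Sᴴ * S).submatrix (Prod.mk i) (Prod.mk j) =
      (S.submatrix id (Prod.mk i))ᴴ * S.submatrix id (Prod.mk j) := by
  rw [submatrix_mul _ _ _ id _ Function.bijective_id, conjTranspose_submatrix]

lemma IsHermitian.mul_conjTranspose_mul_mul {α m n : Type*} [Semiring α] [StarRing α]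
    [Fintype m] [Fintype n] {W : Matrix n n α} (hW : W.IsHermitian) (P Q : Matrix m n α) :
    W * (Pᴴ * Q) * W = (P * W)ᴴ * (Q * W) := by
  rw [conjTranspose_mul, hW.eq, Matrix.mul_assoc, Matrix.mul_assoc, Matrix.mul_assoc]

lemma PosSemidef.hsNorm_conj_block_le {𝕜 ι n : Type*} [RCLike 𝕜] [Fintype ι] [Fintype n]
    [DecidableEq ι] [DecidableEq n]
    {X : Matrix (ι × n) (ι × n) 𝕜} (hX : X.PosSemidef) {W : Matrix n n 𝕜} (hW : W.IsHermitian)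
    (i j : ι) :
    hsNorm (W * X.submatrix (Prod.mk i) (Prod.mk j) * W) ≤
      √(hsNorm (W * X.submatrix (Prod.mk i) (Prod.mk i) * W)) *
        √(hsNorm (W * X.submatrix (Prod.mk j) (Prod.mk j) * W)) := by
  obtain ⟨S, rfl⟩ := CStarAlgebra.nonneg_iff_eq_star_mul_self.mp hX.nonneg
  rw [star_eq_conjTranspose, submatrix_conjTranspose_mul_self, submatrix_conjTranspose_mul_self,
    submatrix_conjTranspose_mul_self, hW.mul_conjTranspose_mul_mul, hW.mul_conjTranspose_mul_mul,
    hW.mul_conjTranspose_mul_mul]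
  exact hsNorm_conjTranspose_mul_le _ _

lemma posSemidef_fin_two_of_sq_le {a b c : ℝ} (ha : 0 ≤ a) (hb : 0 ≤ b) (h : c ^ 2 ≤ a * b) :
    (!![a, c; c, b]).PosSemidef := by
  refine .of_dotProduct_mulVec_nonneg ?_ fun v => ?_
  · ext i j
    fin_cases i <;> fin_cases j <;> rfl
  simp only [star_trivial, dotProduct, mulVec, Fin.sum_univ_two, of_apply, cons_val',
    cons_val_zero, cons_val_one, empty_val', cons_val_fin_one]
  set x := v 0
  set y := v 1
  -- `a Q = (a x + c y)² + (a b - c²) y²` and symmetrically for `b Q`, where `Q` is the form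
  have hQa : 0 ≤ a * (x * (a * x + c * y) + y * (c * x + b * y)) := by
    nlinarith [sq_nonneg (a * x + c * y), mul_nonneg (sub_nonneg.2 h) (sq_nonneg y)]
  have hQb : 0 ≤ b * (x * (a * x + c * y) + y * (c * x + b * y)) := by
    nlinarith [sq_nonneg (c * x + b * y), mul_nonneg (sub_nonneg.2 h) (sq_nonneg x)]
  rcases (add_nonneg ha hb).eq_or_lt with hab | hab
  · have ha0 : a = 0 := by linarith
    have hb0 : b = 0 := by linarith
    have hc0 : c = 0 := by subst ha0; nlinarith [sq_nonneg c]
    simp [ha0, hb0, hc0]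
  · nlinarith

end Matrix

lemma isHermitian_matFun {n : Type*} [Fintype n] [DecidableEq n] (A : Matrix n n ℂ) (f : ℝ → ℝ) :
    (matFun A f).IsHermitian := by
  unfold matFun
  split_ifs with hA
  · rw [star_eq_conjTranspose]
    refine isHermitian_mul_mul_conjTranspose _ (isHermitian_diagonal_of_self_adjoint _ ?_)
    ext i
    simp
  · exact isHermitian_zero

lemma wnorm2_eq_hsNorm {n : Type*} [Fintype n] [DecidableEq n] (ρ Y : Matrix n n ℂ) :
    wnorm2 ρ Y = hsNorm (mpow ρ (1 / 4) * Y * mpow ρ (1 / 4)) :=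
  rfl

theorem block_norm_matrix_psd_general {n : Type*} [Fintype n] [DecidableEq n]
    (ρ : Matrix n n ℂ)
    (X : Matrix (Fin 2 × n) (Fin 2 × n) ℂ) (hX : X.PosSemidef)
    (A B C : Matrix n n ℂ)
    (hA : A = Matrix.of fun i j => X (0, i) (0, j))
    (hB : B = Matrix.of fun i j => X (1, i) (1, j))
    (hC : C = Matrix.of fun i j => X (0, i) (1, j)) :
    wnorm2 ρ C ≤ Real.sqrt (wnorm2 ρ A) * Real.sqrt (wnorm2 ρ B) ∧
    (!![wnorm2 ρ A, wnorm2 ρ C; wnorm2 ρ (Cᴴ), wnorm2 ρ B]).PosSemidef := by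
  have hW : (mpow ρ (1 / 4)).IsHermitian := isHermitian_matFun ρ _
  have hCA : wnorm2 ρ C ≤ √(wnorm2 ρ A) * √(wnorm2 ρ B) := by
    simp only [wnorm2_eq_hsNorm, hA, hB, hC]
    exact hX.hsNorm_conj_block_le hW 0 1
  have hCH : wnorm2 ρ Cᴴ = wnorm2 ρ C := by
    rw [wnorm2_eq_hsNorm, wnorm2_eq_hsNorm, ← hsNorm_conjTranspose, conjTranspose_mul,
      conjTranspose_mul, hW.eq, conjTranspose_conjTranspose, Matrix.mul_assoc]
  have hnn (Y : Matrix n n ℂ) : 0 ≤ wnorm2 ρ Y := Real.sqrt_nonneg _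
  have hCA_sq : wnorm2 ρ C ^ 2 ≤ wnorm2 ρ A * wnorm2 ρ B := by
    rw [← Real.sqrt_mul (hnn A)] at hCA
    exact (Real.le_sqrt (hnn C) (mul_nonneg (hnn A) (hnn B))).1 hCA
  rw [hCH]
  exact ⟨hCA, posSemidef_fin_two_of_sq_le (hnn A) (hnn B) hCA_sq⟩

/-- For a positive semi-definite `2×2` block matrix `X = [[A, C],[C†, B]]` and a
positive definite density matrix `ρ`, `‖C‖_{2,ρ} ≤ ‖A‖_{2,ρ}^{1/2} ‖B‖_{2,ρ}^{1/2}`,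
and the `2×2` real matrix of weighted norms is positive semi-definite. -/
theorem block_norm_matrix_psd {n : Type*} [Fintype n] [DecidableEq n]
    (ρ : Matrix n n ℂ) (hρ : ρ.PosDef) (hρ1 : ρ.trace = 1)
    (X : Matrix (Fin 2 × n) (Fin 2 × n) ℂ) (hX : X.PosSemidef)
    (A B C : Matrix n n ℂ)
    (hA : A = Matrix.of fun i j => X (0, i) (0, j))
    (hB : B = Matrix.of fun i j => X (1, i) (1, j))
    (hC : C = Matrix.of fun i j => X (0, i) (1, j)) :
    wnorm2 ρ C ≤ Real.sqrt (wnorm2 ρ A) * Real.sqrt (wnorm2 ρ B) ∧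
    (!![wnorm2 ρ A, wnorm2 ρ C; wnorm2 ρ (Cᴴ), wnorm2 ρ B]).PosSemidef :=
  block_norm_matrix_psd_general ρ X hX A B C hA hB hC
end

section
/- Suppose for all n a sequence of tests T_n satisfies log tr(σ^{⊗n} T_n) ≥ −n D(ρ‖σ) − 2√(nγ log(1/tr(ρ^{⊗n}T_n))) + log tr(ρ^{⊗n}T_n), where γ = ‖ρσ^{-1}‖_∞ ≥ 1. If additionally tr(σ^{⊗n} T_n) ≤ e^{−nr} for some r > D(ρ‖σ), then the Type I error α_n = 1 − tr(ρ^{⊗n} T_n) satisfies α_n ≥ 1 − e^{−nf} with f = (√(γ + r − D(ρ‖σ)) − √γ)². -/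
/-!
Write `L = log (1/p)`. The two bounds on `log β` give `n (r - D) ≤ 2 √(nγ L) + L`, i.e.
`nγ + n (r - D) ≤ (√(nγ) + √L)²`. Taking square roots and dividing by `√n` gives
`√n (√(γ + (r - D)) - √γ) ≤ √L`, so `n f ≤ L`, which is `p ≤ e^{-nf}`.
-/

open Real

lemma Real.sqrt_add_sub_sqrt_le_sqrt {a d L : ℝ} (ha : 0 ≤ a) (hL : 0 ≤ L)
    (h : d ≤ 2 * √(a * L) + L) : √(a + d) - √a ≤ √L := by
  have hsq : a + d ≤ (√a + √L) ^ 2 := by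
    rw [add_sq, sq_sqrt ha, sq_sqrt hL, mul_assoc, ← sqrt_mul ha]
    linarith
  linarith [sqrt_le_iff.2 ⟨by positivity, hsq⟩]

lemma Real.mul_sq_sqrt_add_sub_sqrt_le {n γ δ L : ℝ} (hn : 0 ≤ n) (hγ : 0 ≤ γ) (hδ : 0 ≤ δ)
    (hL : 0 ≤ L) (h : n * δ ≤ 2 * √(n * γ * L) + L) :
    n * (√(γ + δ) - √γ) ^ 2 ≤ L := by
  have hroot : √n * (√(γ + δ) - √γ) ≤ √L := by
    have := sqrt_add_sub_sqrt_le_sqrt (mul_nonneg hn hγ) hL h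
    rwa [← mul_add, sqrt_mul hn, sqrt_mul hn, ← mul_sub] at this
  have hdiff : 0 ≤ √(γ + δ) - √γ := sub_nonneg.2 (sqrt_le_sqrt (by linarith))
  calc n * (√(γ + δ) - √γ) ^ 2 = (√n * (√(γ + δ) - √γ)) ^ 2 := by rw [mul_pow, sq_sqrt hn]
    _ ≤ √L ^ 2 := pow_le_pow_left₀ (by positivity) hroot 2
    _ = L := sq_sqrt hL

theorem strong_converse_algebra_general (D γ r : ℝ) (n : ℕ) (β p : ℝ)
    (hγ : 1 ≤ γ) (hr : D < r)
    (hβ0 : 0 < β) (hβ : β ≤ Real.exp (-(n * r)))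
    (hp0 : 0 < p) (hp1 : p ≤ 1)
    (hmain : -(n * D) - 2 * Real.sqrt (n * γ * Real.log (1 / p)) + Real.log p ≤
      Real.log β) :
    1 - Real.exp (-(n * (Real.sqrt (γ + (r - D)) - Real.sqrt γ) ^ 2)) ≤ 1 - p := by
  rw [one_div, log_inv] at hmain
  have hL : 0 ≤ -log p := neg_nonneg.2 (log_nonpos hp0.le hp1)
  have hlogβ : log β ≤ -(n * r) := (log_le_iff_le_exp hβ0).2 hβ
  have hnf := mul_sq_sqrt_add_sub_sqrt_le n.cast_nonneg (by linarith : 0 ≤ γ) (sub_nonneg.2 hr.le)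
    hL (by linarith)
  have hp : p ≤ exp (-(n * (√(γ + (r - D)) - √γ) ^ 2)) :=
    (log_le_iff_le_exp hp0).1 (by linarith)
  linarith

/-- Algebraic form of the finite-blocklength strong converse for quantum hypothesis
testing: if `log β ≥ -nD - 2√(nγ log(1/p)) + log p`, `β ≤ e^{-nr}` with `r > D`,
then `p ≤ e^{-nf}` (i.e. the Type I error `1 - p` is at least `1 - e^{-nf}`) with
`f = (√(γ + (r - D)) - √γ)²`. -/
theorem strong_converse_algebra (D γ r : ℝ) (n : ℕ) (β p : ℝ)
    (hD : 0 ≤ D) (hγ : 1 ≤ γ) (hr : D < r) (hn : 1 ≤ n)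
    (hβ0 : 0 < β) (hβ : β ≤ Real.exp (-(n * r)))
    (hp0 : 0 < p) (hp1 : p ≤ 1)
    (hmain : -(n * D) - 2 * Real.sqrt (n * γ * Real.log (1 / p)) + Real.log p ≤
      Real.log β) :
    1 - Real.exp (-(n * (Real.sqrt (γ + (r - D)) - Real.sqrt γ) ^ 2)) ≤ 1 - p :=
  strong_converse_algebra_general D γ r n β p hγ hr hβ0 hβ hp0 hp1 hmain
end
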